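/- arXiv:math/0602122 — 4 statements merged into one kernel-verified Lean document; each statement's English description precedes it below -/
import Mathlib

section
/- Let X be an involutive A-A-equivalence bimodule and L its linking algebra acting on X ⊕ A. Then B_X = { [[a, x],[(x^♯)~, a]] : a ∈ A, x ∈ X } is a C*-subalgebra of L containing A (embedded diagonally), and the map E_X([[a,x],[(x^♯)~,a]]) = diag(a,a) is a conditional expectation of B_X onto A. -/
/-!
Write `p = ι₁ 1` and `q = ι₂ 1 = 1 - p` for the diagonal projections of the linking algebra.
`B_X` is the range of the map `(a, x) ↦ [[a, x], [(x^♯)~, a]]`, which is ℂ-linear because `♯` and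
the adjoint are both conjugate-linear. The multiplication table of the corners gives
`[[a, x], ·] * [[b, y], ·] = [[a b + _A⟨x, y^♯⟩, a·y + x·b], ·]` (the lower left corner matches
because `(a·y + x·b)^♯ = y^♯·a* + b*·x^♯` and `_A⟨x, y^♯⟩ = ⟨x^♯, y⟩_A`) and
`star [[a, x], ·] = [[a*, x^♯], ·]`. The map is bounded below, as `a` and `(x^♯)~` are the
compressions `p m p` and `q m p` of its value `m`, so `B_X` is closed. `E_X` is the pinching
`m ↦ p m p + q m q`: it is idempotent, `*`-preserving, a bimodule map over the commutant of `p`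
(which contains the diagonal copy of `A`), and positive, since
`p m* m p + q m* m q = (m p)* (m p) + (m q)* (m q)`.
-/
noncomputable section

/-- An A-A-equivalence bimodule (imprimitivity bimodule) structure on `X`. -/
structure EqvBimod (A : Type*) [NormedRing A] [StarRing A] [NormedAlgebra ℂ A]
    (X : Type*) [NormedAddCommGroup X] [NormedSpace ℂ X] [CompleteSpace X] where
  ls : A → X →ₗ[ℂ] X          -- left action  a · x
  rs : A → X →ₗ[ℂ] X          -- right action x · a
  ls_one : ∀ x, ls 1 x = x
  ls_mul : ∀ a b x, ls (a * b) x = ls a (ls b x)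
  ls_add : ∀ a b x, ls (a + b) x = ls a x + ls b x
  rs_one : ∀ x, rs 1 x = x
  rs_mul : ∀ a b x, rs (a * b) x = rs b (rs a x)
  rs_add : ∀ a b x, rs (a + b) x = rs a x + rs b x
  ls_rs : ∀ a b x, ls a (rs b x) = rs b (ls a x)
  linn : X → X → A            -- left inner product  _A⟨x, y⟩
  rinn : X → X → A            -- right inner product ⟨x, y⟩_A
  linn_add_left : ∀ x y z, linn (x + y) z = linn x z + linn y z
  linn_smul_left : ∀ (c : ℂ) x y, linn (c • x) y = c • linn x y
  linn_star : ∀ x y, star (linn x y) = linn y x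
  linn_ls : ∀ a x y, linn (ls a x) y = a * linn x y
  rinn_add_right : ∀ x y z, rinn x (y + z) = rinn x y + rinn x z
  rinn_smul_right : ∀ (c : ℂ) x y, rinn x (c • y) = c • rinn x y
  rinn_star : ∀ x y, star (rinn x y) = rinn y x
  rinn_rs : ∀ a x y, rinn x (rs a y) = rinn x y * a
  compat : ∀ x y z, ls (linn x y) z = rs (rinn y z) x
  lpos : ∀ x, ∃ a, linn x x = star a * a
  rpos : ∀ x, ∃ a, rinn x x = star a * a
  lfull : (Submodule.span ℂ {a : A | ∃ x y, a = linn x y}).topologicalClosure = ⊤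
  rfull : (Submodule.span ℂ {a : A | ∃ x y, a = rinn x y}).topologicalClosure = ⊤
  norm_inn : ∀ x, ‖x‖ ^ 2 = ‖rinn x x‖

/-- An involutive A-A-equivalence bimodule: an equivalence bimodule together with a
conjugate-linear involution `x ↦ x^♯` satisfying `(x^♯)^♯ = x`,
`(a·x·b)^♯ = b*·x^♯·a*`, and `_A⟨x, y^♯⟩ = ⟨x^♯, y⟩_A`. -/
structure InvBimod (A : Type*) [NormedRing A] [StarRing A] [NormedAlgebra ℂ A]
    (X : Type*) [NormedAddCommGroup X] [NormedSpace ℂ X] [CompleteSpace X]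
    extends EqvBimod A X where
  sh : X → X
  sh_add : ∀ x y, sh (x + y) = sh x + sh y
  sh_smul : ∀ (c : ℂ) x, sh (c • x) = star c • sh x
  sh_sh : ∀ x, sh (sh x) = x
  sh_ls : ∀ a x, sh (ls a x) = rs (star a) (sh x)
  sh_rs : ∀ a x, sh (rs a x) = ls (star a) (sh x)
  sh_inn : ∀ x y, linn x (sh y) = rinn (sh x) y

section Pinching

variable {S R : Type*} [CommSemiring S] [Ring R] [Algebra S R]

variable (S) in
def pinching (p : R) : R →ₗ[S] R :=
  LinearMap.mulLeftRight S (p, p) + LinearMap.mulLeftRight S (1 - p, 1 - p)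

theorem pinching_apply (p l : R) : pinching S p l = p * l * p + (1 - p) * l * (1 - p) := rfl

theorem pinching_mul_left {p d : R} (h : Commute d p) (l : R) :
    pinching S p (d * l) = d * pinching S p l := by
  have h' : Commute d (1 - p) := (Commute.one_right d).sub_right h
  simp only [pinching_apply, mul_add, ← mul_assoc, ← h.eq, ← h'.eq]

theorem pinching_mul_right {p d : R} (h : Commute d p) (l : R) :
    pinching S p (l * d) = pinching S p l * d := by
  have h' : Commute d (1 - p) := (Commute.one_right d).sub_right h
  simp only [pinching_apply, add_mul, mul_assoc, h.eq, h'.eq]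

theorem pinching_pinching {p : R} (hp : IsIdempotentElem p) (l : R) :
    pinching S p (pinching S p l) = pinching S p l := by
  have hpq : p * (1 - p) = 0 := hp.mul_one_sub_self
  have hqp : (1 - p) * p = 0 := hp.one_sub_mul_self
  simp only [pinching_apply, mul_add, ← mul_assoc, hpq, hqp, zero_mul, add_zero,
    zero_add, hp.eq, hp.one_sub.eq]
  simp only [mul_assoc, hp.eq, hp.one_sub.eq]

variable [StarRing R]

theorem pinching_star {p : R} (hp : IsSelfAdjoint p) (l : R) :
    pinching S p (star l) = star (pinching S p l) := by
  simp only [pinching_apply, star_add, star_mul, star_sub, star_one, hp.star_eq, mul_assoc]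

theorem pinching_star_mul_self_nonneg [PartialOrder R] [StarOrderedRing R] {p : R}
    (hp : IsSelfAdjoint p) (x : R) : 0 ≤ pinching S p (star x * x) := by
  have hq : IsSelfAdjoint (1 - p) := (IsSelfAdjoint.one R).sub hp
  have h : ∀ e : R, IsSelfAdjoint e → e * (star x * x) * e = star (x * e) * (x * e) := by
    intro e he
    rw [star_mul, he.star_eq]
    noncomm_ring
  rw [pinching_apply, h p hp, h _ hq]
  exact add_nonneg (star_mul_self_nonneg _) (star_mul_self_nonneg _)

end Pinching

theorem IsStarProjection.norm_mul_mul_le {E : Type*} [NonUnitalNormedRing E] [StarRing E]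
    [CStarRing E] {p q : E} (hp : IsStarProjection p) (hq : IsStarProjection q) (l : E) :
    ‖p * l * q‖ ≤ ‖l‖ :=
  calc ‖p * l * q‖ ≤ ‖p‖ * ‖l‖ * ‖q‖ := norm_mul₃_le
    _ ≤ 1 * ‖l‖ * 1 := by
        gcongr
        exacts [IsStarProjection.norm_le p hp, IsStarProjection.norm_le q hq]
    _ = ‖l‖ := by ring

def LinearMap.toNonUnitalStarAlgHom {R A B : Type*} [CommSemiring R] [NonUnitalNonAssocSemiring A]
    [Module R A] [Star A] [NonUnitalNonAssocSemiring B] [Module R B] [Star B] (f : A →ₗ[R] B)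
    (map_mul : ∀ a b, f (a * b) = f a * f b) (map_star : ∀ a, f (star a) = star (f a)) :
    A →⋆ₙₐ[R] B :=
  { f with map_zero' := f.map_zero, map_mul' := map_mul, map_star' := map_star }

namespace InvBimod

variable {A X : Type*} [NormedRing A] [StarRing A] [NormedAlgebra ℂ A]
  [NormedAddCommGroup X] [NormedSpace ℂ X] [CompleteSpace X] (M : InvBimod A X)

theorem sh_zero : M.sh 0 = 0 := by
  simpa using M.sh_smul 0 0

theorem linn_sh_sh (x : X) : M.linn (M.sh x) (M.sh x) = M.rinn x x := by
  simpa only [M.sh_sh] using M.sh_inn (M.sh x) x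

end InvBimod

section LinkingAlgebra

variable {A X L : Type*}

section Algebraic

variable [NormedRing A] [StarRing A] [NormedAlgebra ℂ A]
  [NormedAddCommGroup X] [NormedSpace ℂ X] [CompleteSpace X]
  [Ring L] [StarRing L] [Algebra ℂ L]

/-- `ι₁`, `ι₂` and `j` are the corner embeddings `a ↦ [[a, 0], [0, 0]]`, `b ↦ [[0, 0], [0, b]]`,
`x ↦ [[0, x], [0, 0]]` of the linking algebra of `X` into `L`. -/
structure IsLinking (M : InvBimod A X) (ι₁ ι₂ : A →ₗ[ℂ] L) (j : X →ₗ[ℂ] L) : Prop where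
  ι₁_mul_ι₁ : ∀ a b, ι₁ a * ι₁ b = ι₁ (a * b)
  ι₂_mul_ι₂ : ∀ a b, ι₂ a * ι₂ b = ι₂ (a * b)
  star_ι₁ : ∀ a, star (ι₁ a) = ι₁ (star a)
  star_ι₂ : ∀ a, star (ι₂ a) = ι₂ (star a)
  ι₁_mul_ι₂ : ∀ a b, ι₁ a * ι₂ b = 0
  ι₂_mul_ι₁ : ∀ a b, ι₂ a * ι₁ b = 0
  ι₁_one_add_ι₂_one : ι₁ 1 + ι₂ 1 = 1
  ι₁_mul_j : ∀ a x, ι₁ a * j x = j (M.ls a x)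
  j_mul_ι₂ : ∀ a x, j x * ι₂ a = j (M.rs a x)
  j_mul_star_j : ∀ x y, j x * star (j y) = ι₁ (M.linn x y)
  star_j_mul_j : ∀ x y, star (j x) * j y = ι₂ (M.rinn x y)
  j_mul_j : ∀ x y, j x * j y = 0
  ι₂_mul_j : ∀ a x, ι₂ a * j x = 0
  j_mul_ι₁ : ∀ a x, j x * ι₁ a = 0

variable {M : InvBimod A X} {ι₁ ι₂ : A →ₗ[ℂ] L} {j : X →ₗ[ℂ] L}

namespace IsLinking

variable (hL : IsLinking M ι₁ ι₂ j)
include hL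

theorem ι₁_mul_star_j (a : A) (y : X) : ι₁ a * star (j y) = 0 := by
  rw [← star_star (ι₁ a), hL.star_ι₁, ← star_mul, hL.j_mul_ι₁, star_zero]

theorem star_j_mul_ι₁ (a : A) (y : X) : star (j y) * ι₁ a = star (j (M.ls (star a) y)) := by
  rw [← hL.ι₁_mul_j, star_mul, hL.star_ι₁, star_star]

theorem ι₂_mul_star_j (a : A) (y : X) : ι₂ a * star (j y) = star (j (M.rs (star a) y)) := by
  rw [← hL.j_mul_ι₂, star_mul, hL.star_ι₂, star_star]

theorem star_j_mul_ι₂ (a : A) (y : X) : star (j y) * ι₂ a = 0 := by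
  rw [← star_star (ι₂ a), hL.star_ι₂, ← star_mul, hL.ι₂_mul_j, star_zero]

theorem star_j_mul_star_j (x y : X) : star (j x) * star (j y) = 0 := by
  rw [← star_mul, hL.j_mul_j, star_zero]

theorem one_sub_ι₁_one : 1 - ι₁ 1 = ι₂ 1 :=
  sub_eq_of_eq_add' hL.ι₁_one_add_ι₂_one.symm

theorem isStarProjection_ι₁_one : IsStarProjection (ι₁ (1 : A)) where
  isIdempotentElem := by rw [IsIdempotentElem, hL.ι₁_mul_ι₁, mul_one]
  isSelfAdjoint := by rw [IsSelfAdjoint, hL.star_ι₁, star_one]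

theorem isStarProjection_ι₂_one : IsStarProjection (ι₂ (1 : A)) :=
  hL.one_sub_ι₁_one ▸ hL.isStarProjection_ι₁_one.one_sub

theorem commute_ι₁_add_ι₂ (a : A) : Commute (ι₁ a + ι₂ a) (ι₁ 1) := by
  simp only [Commute, SemiconjBy, add_mul, mul_add, hL.ι₁_mul_ι₁, hL.ι₂_mul_ι₁, hL.ι₁_mul_ι₂,
    mul_one, one_mul]

end IsLinking

variable [StarModule ℂ L]

/-- `sharpMatrix M ι₁ ι₂ j (a, x)` is the matrix `[[a, x], [(x^♯)~, a]]`. -/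
def sharpMatrix (M : InvBimod A X) (ι₁ ι₂ : A →ₗ[ℂ] L) (j : X →ₗ[ℂ] L) : A × X →ₗ[ℂ] L where
  toFun ax := ι₁ ax.1 + ι₂ ax.1 + j ax.2 + star (j (M.sh ax.2))
  map_add' u v := by
    simp only [Prod.fst_add, Prod.snd_add, map_add, M.sh_add, star_add]
    abel
  map_smul' c ax := by
    simp only [Prod.smul_fst, Prod.smul_snd, map_smul, M.sh_smul, star_smul, star_star,
      RingHom.id_apply, smul_add]

theorem sharpMatrix_apply (a : A) (x : X) :
    sharpMatrix M ι₁ ι₂ j (a, x) = ι₁ a + ι₂ a + j x + star (j (M.sh x)) := rfl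

theorem sharpMatrix_zero_right (a : A) : sharpMatrix M ι₁ ι₂ j (a, 0) = ι₁ a + ι₂ a := by
  simp [sharpMatrix_apply, M.sh_zero]

namespace IsLinking

variable (hL : IsLinking M ι₁ ι₂ j)
include hL

theorem sharpMatrix_mul (a b : A) (x y : X) :
    sharpMatrix M ι₁ ι₂ j (a, x) * sharpMatrix M ι₁ ι₂ j (b, y) =
      sharpMatrix M ι₁ ι₂ j (a * b + M.linn x (M.sh y), M.ls a y + M.rs b x) := by
  simp only [sharpMatrix_apply, add_mul, mul_add, hL.ι₁_mul_ι₁, hL.ι₂_mul_ι₂, hL.ι₁_mul_ι₂,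
    hL.ι₂_mul_ι₁, hL.ι₁_mul_j, hL.j_mul_ι₂, hL.ι₂_mul_j, hL.j_mul_ι₁, hL.ι₁_mul_star_j,
    hL.star_j_mul_ι₁, hL.ι₂_mul_star_j, hL.star_j_mul_ι₂, hL.j_mul_star_j, hL.star_j_mul_j,
    hL.j_mul_j, hL.star_j_mul_star_j, M.sh_add, M.sh_ls, M.sh_rs, M.sh_inn, map_add,
    star_add, add_zero, zero_add]
  abel

theorem star_sharpMatrix (a : A) (x : X) :
    star (sharpMatrix M ι₁ ι₂ j (a, x)) = sharpMatrix M ι₁ ι₂ j (star a, M.sh x) := by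
  simp only [sharpMatrix_apply, star_add, hL.star_ι₁, hL.star_ι₂, star_star, M.sh_sh]
  abel

theorem sharpMatrix_one : sharpMatrix M ι₁ ι₂ j (1, 0) = 1 := by
  rw [sharpMatrix_zero_right, hL.ι₁_one_add_ι₂_one]

theorem ι₁_one_mul_sharpMatrix_mul_ι₁_one (a : A) (x : X) :
    ι₁ 1 * sharpMatrix M ι₁ ι₂ j (a, x) * ι₁ 1 = ι₁ a := by
  simp only [sharpMatrix_apply, add_mul, mul_add, hL.ι₁_mul_ι₁, hL.ι₁_mul_ι₂, hL.ι₁_mul_j,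
    hL.j_mul_ι₁, hL.ι₁_mul_star_j, one_mul, mul_one, add_zero]

theorem ι₂_one_mul_sharpMatrix_mul_ι₂_one (a : A) (x : X) :
    ι₂ 1 * sharpMatrix M ι₁ ι₂ j (a, x) * ι₂ 1 = ι₂ a := by
  simp only [sharpMatrix_apply, add_mul, mul_add, hL.ι₂_mul_ι₂, hL.ι₂_mul_ι₁, hL.ι₂_mul_j,
    hL.ι₂_mul_star_j, hL.star_j_mul_ι₂, one_mul, mul_one, add_zero, zero_add]

theorem ι₂_one_mul_sharpMatrix_mul_ι₁_one (a : A) (x : X) :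
    ι₂ 1 * sharpMatrix M ι₁ ι₂ j (a, x) * ι₁ 1 = star (j (M.sh x)) := by
  simp only [sharpMatrix_apply, add_mul, mul_add, hL.ι₂_mul_ι₂, hL.ι₂_mul_ι₁, hL.ι₂_mul_j,
    hL.ι₂_mul_star_j, hL.star_j_mul_ι₁, star_one, M.ls_one, M.rs_one, add_zero, zero_add]

theorem pinching_sharpMatrix (a : A) (x : X) :
    pinching ℂ (ι₁ 1) (sharpMatrix M ι₁ ι₂ j (a, x)) = ι₁ a + ι₂ a := by
  rw [pinching_apply, hL.one_sub_ι₁_one, hL.ι₁_one_mul_sharpMatrix_mul_ι₁_one,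
    hL.ι₂_one_mul_sharpMatrix_mul_ι₂_one]

/-- The algebra `B_X`. -/
def sharpSubalgebra : StarSubalgebra ℂ L where
  toSubalgebra := (LinearMap.range (sharpMatrix M ι₁ ι₂ j)).toSubalgebra
    (hL.sharpMatrix_one ▸ LinearMap.mem_range_self _ _) <| by
      rintro _ _ ⟨⟨a, x⟩, rfl⟩ ⟨⟨b, y⟩, rfl⟩
      exact hL.sharpMatrix_mul a b x y ▸ LinearMap.mem_range_self _ _
  star_mem' := by
    rintro _ ⟨⟨a, x⟩, rfl⟩
    exact (hL.star_sharpMatrix a x).symm ▸ LinearMap.mem_range_self _ _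

theorem coe_sharpSubalgebra :
    (hL.sharpSubalgebra : Set L) = {l | ∃ a x, l = ι₁ a + ι₂ a + j x + star (j (M.sh x))} := by
  ext l
  simp [sharpSubalgebra, sharpMatrix_apply, eq_comm]

theorem ι₁_add_ι₂_mem (a : A) : ι₁ a + ι₂ a ∈ hL.sharpSubalgebra :=
  sharpMatrix_zero_right (M := M) (j := j) a ▸ LinearMap.mem_range_self _ _

end IsLinking

end Algebraic

section Analytic

variable [CStarAlgebra A] [NormedAddCommGroup X] [NormedSpace ℂ X] [CompleteSpace X]
  [CStarAlgebra L] {M : InvBimod A X} {ι₁ ι₂ : A →ₗ[ℂ] L} {j : X →ₗ[ℂ] L}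

namespace IsLinking

variable (hL : IsLinking M ι₁ ι₂ j)
include hL

theorem norm_ι₁ (hι₁ : Function.Injective ι₁) (a : A) : ‖ι₁ a‖ = ‖a‖ :=
  NonUnitalStarAlgHom.norm_map
    (ι₁.toNonUnitalStarAlgHom (fun a b => (hL.ι₁_mul_ι₁ a b).symm) fun a => (hL.star_ι₁ a).symm)
    hι₁ a

theorem norm_ι₂_le (a : A) : ‖ι₂ a‖ ≤ ‖a‖ :=
  NonUnitalStarAlgHom.norm_apply_le
    (ι₂.toNonUnitalStarAlgHom (fun a b => (hL.ι₂_mul_ι₂ a b).symm) fun a => (hL.star_ι₂ a).symm) a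

theorem norm_j_le (x : X) : ‖j x‖ ≤ ‖x‖ := by
  refine (pow_le_pow_iff_left₀ (norm_nonneg _) (norm_nonneg _) two_ne_zero).mp ?_
  rw [sq, ← CStarRing.norm_star_mul_self, hL.star_j_mul_j, M.norm_inn]
  exact hL.norm_ι₂_le _

theorem norm_j_sh (hι₁ : Function.Injective ι₁) (x : X) : ‖j (M.sh x)‖ = ‖x‖ := by
  refine (pow_left_inj₀ (norm_nonneg _) (norm_nonneg _) two_ne_zero).mp ?_
  rw [sq, ← CStarRing.norm_self_mul_star, hL.j_mul_star_j, hL.norm_ι₁ hι₁, M.linn_sh_sh,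
    M.norm_inn]

theorem norm_le_norm_sharpMatrix (hι₁ : Function.Injective ι₁) (ax : A × X) :
    ‖ax‖ ≤ ‖sharpMatrix M ι₁ ι₂ j ax‖ := by
  obtain ⟨a, x⟩ := ax
  have hp := hL.isStarProjection_ι₁_one
  have hq := hL.isStarProjection_ι₂_one
  refine max_le ?_ ?_
  · calc ‖a‖ = ‖ι₁ 1 * sharpMatrix M ι₁ ι₂ j (a, x) * ι₁ 1‖ := by
          rw [hL.ι₁_one_mul_sharpMatrix_mul_ι₁_one, hL.norm_ι₁ hι₁]
      _ ≤ _ := hp.norm_mul_mul_le hp _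
  · calc ‖x‖ = ‖ι₂ 1 * sharpMatrix M ι₁ ι₂ j (a, x) * ι₁ 1‖ := by
          rw [hL.ι₂_one_mul_sharpMatrix_mul_ι₁_one, norm_star, hL.norm_j_sh hι₁]
      _ ≤ _ := hq.norm_mul_mul_le hp _

theorem norm_sharpMatrix_le (hι₁ : Function.Injective ι₁) (ax : A × X) :
    ‖sharpMatrix M ι₁ ι₂ j ax‖ ≤ 4 * ‖ax‖ := by
  obtain ⟨a, x⟩ := ax
  have ha : ‖a‖ ≤ ‖(a, x)‖ := norm_fst_le (a, x)
  have hx : ‖x‖ ≤ ‖(a, x)‖ := norm_snd_le (a, x)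
  calc ‖sharpMatrix M ι₁ ι₂ j (a, x)‖ ≤ ‖ι₁ a‖ + ‖ι₂ a‖ + ‖j x‖ + ‖star (j (M.sh x))‖ :=
        norm_add₄_le
    _ ≤ ‖a‖ + ‖a‖ + ‖x‖ + ‖x‖ := by
        rw [norm_star, hL.norm_j_sh hι₁]
        gcongr
        exacts [(hL.norm_ι₁ hι₁ a).le, hL.norm_ι₂_le a, hL.norm_j_le x]
    _ ≤ 4 * ‖(a, x)‖ := by linarith

theorem isClosed_sharpSubalgebra (hι₁ : Function.Injective ι₁) :
    IsClosed (hL.sharpSubalgebra : Set L) :=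
  (AddMonoidHomClass.antilipschitz_of_bound (K := 1) (sharpMatrix M ι₁ ι₂ j) fun ax => by
      simpa using hL.norm_le_norm_sharpMatrix hι₁ ax).isClosed_range
    (AddMonoidHomClass.uniformContinuous_of_bound _ 4 (hL.norm_sharpMatrix_le hι₁))

end IsLinking

end Analytic

end LinkingAlgebra

theorem linking_subalgebra_and_expectation_general
    {A X L : Type*} [NormedRing A] [StarRing A] [CStarRing A] [NormedAlgebra ℂ A]
    [StarModule ℂ A] [CompleteSpace A]
    [NormedAddCommGroup X] [NormedSpace ℂ X] [CompleteSpace X]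
    [NormedRing L] [StarRing L] [CStarRing L] [NormedAlgebra ℂ L]
    [StarModule ℂ L] [CompleteSpace L]
    (M : InvBimod A X)
    -- the linking algebra L of X: corner embeddings ι₁, ι₂ of A and j of X
    (ι₁ ι₂ : A →ₗ[ℂ] L) (j : X →ₗ[ℂ] L)
    (hι₁m : ∀ a b, ι₁ (a * b) = ι₁ a * ι₁ b)
    (hι₂m : ∀ a b, ι₂ (a * b) = ι₂ a * ι₂ b)
    (hι₁s : ∀ a, star (ι₁ a) = ι₁ (star a))
    (hι₂s : ∀ a, star (ι₂ a) = ι₂ (star a))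
    (hι₁inj : Function.Injective ι₁)
    (horth : ∀ a b, ι₁ a * ι₂ b = 0)
    (horth' : ∀ a b, ι₂ a * ι₁ b = 0)
    (hone : ι₁ 1 + ι₂ 1 = 1)
    (hjl : ∀ a x, j (M.ls a x) = ι₁ a * j x)
    (hjr : ∀ a x, j (M.rs a x) = j x * ι₂ a)
    (hjj : ∀ x y, j x * star (j y) = ι₁ (M.linn x y))
    (hjj' : ∀ x y, star (j x) * j y = ι₂ (M.rinn x y))
    (hjz : ∀ x y, j x * j y = 0)
    (hj12 : ∀ a x, ι₂ a * j x = 0)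
    (hj21 : ∀ a x, j x * ι₁ a = 0)
    -- B_X as a subset of L
    (BX : Set L)
    (hBX : BX = {l : L | ∃ a x, l = ι₁ a + ι₂ a + j x + star (j (M.sh x))}) :
    -- B_X is a C*-subalgebra of L containing the diagonal copy of A
    (1 : L) ∈ BX ∧
    (∀ a : A, ι₁ a + ι₂ a ∈ BX) ∧
    (∀ p ∈ BX, ∀ q ∈ BX, p + q ∈ BX) ∧
    (∀ (c : ℂ), ∀ p ∈ BX, c • p ∈ BX) ∧
    (∀ p ∈ BX, star p ∈ BX) ∧
    (∀ p ∈ BX, ∀ q ∈ BX, p * q ∈ BX) ∧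
    IsClosed BX ∧
    -- E_X is well defined and is a conditional expectation onto A
    (∃ EX : L →ₗ[ℂ] L,
      (∀ a x, EX (ι₁ a + ι₂ a + j x + star (j (M.sh x))) = ι₁ a + ι₂ a) ∧
      (∀ p ∈ BX, EX (EX p) = EX p) ∧
      (∀ a : A, ∀ p ∈ BX, EX ((ι₁ a + ι₂ a) * p) = (ι₁ a + ι₂ a) * EX p) ∧
      (∀ a : A, ∀ p ∈ BX, EX (p * (ι₁ a + ι₂ a)) = EX p * (ι₁ a + ι₂ a)) ∧
      (∀ p ∈ BX, EX (star p) = star (EX p)) ∧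
      (∀ p ∈ BX, ∃ c : L, EX (star p * p) = star c * c)) := by
  let _ : CStarAlgebra A := ⟨⟩
  let _ : CStarAlgebra L := ⟨⟩
  let _ := CStarAlgebra.spectralOrder L
  have _ := CStarAlgebra.spectralOrderedRing L
  have hL : IsLinking M ι₁ ι₂ j :=
    ⟨fun a b => (hι₁m a b).symm, fun a b => (hι₂m a b).symm, hι₁s, hι₂s, horth, horth', hone,
      fun a x => (hjl a x).symm, fun a x => (hjr a x).symm, hjj, hjj', hjz, hj12, hj21⟩
  have hE := hL.isStarProjection_ι₁_one
  subst hBX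
  rw [← hL.coe_sharpSubalgebra]
  exact ⟨one_mem _, hL.ι₁_add_ι₂_mem, fun _ hp _ hq => add_mem hp hq,
    fun c _ hp => SMulMemClass.smul_mem c hp, fun _ hp => star_mem hp,
    fun _ hp _ hq => mul_mem hp hq, hL.isClosed_sharpSubalgebra hι₁inj, pinching ℂ (ι₁ 1),
    hL.pinching_sharpMatrix, fun p _ => pinching_pinching hE.isIdempotentElem p,
    fun a p _ => pinching_mul_left (hL.commute_ι₁_add_ι₂ a) p,
    fun a p _ => pinching_mul_right (hL.commute_ι₁_add_ι₂ a) p,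
    fun p _ => pinching_star hE.isSelfAdjoint p,
    fun p _ => CStarAlgebra.nonneg_iff_eq_star_mul_self.mp
      (pinching_star_mul_self_nonneg hE.isSelfAdjoint p)⟩

/-- inside the linking algebra `L` of an involutive A-A-equivalence
bimodule `X`, the set `B_X = {[[a,x],[(x^♯)~,a]]}` is a C*-subalgebra of `L` containing
`A` (diagonally), and `[[a,x],[(x^♯)~,a]] ↦ diag(a,a)` is a conditional expectation
`E_X : B_X → A`. -/
theorem linking_subalgebra_and_expectation
    {A X L : Type*} [NormedRing A] [StarRing A] [CStarRing A] [NormedAlgebra ℂ A]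
    [StarModule ℂ A] [CompleteSpace A]
    [NormedAddCommGroup X] [NormedSpace ℂ X] [CompleteSpace X]
    [NormedRing L] [StarRing L] [CStarRing L] [NormedAlgebra ℂ L]
    [StarModule ℂ L] [CompleteSpace L]
    (M : InvBimod A X)
    -- the linking algebra L of X: corner embeddings ι₁, ι₂ of A and j of X
    (ι₁ ι₂ : A →ₗ[ℂ] L) (j : X →ₗ[ℂ] L)
    (hι₁m : ∀ a b, ι₁ (a * b) = ι₁ a * ι₁ b)
    (hι₂m : ∀ a b, ι₂ (a * b) = ι₂ a * ι₂ b)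
    (hι₁s : ∀ a, star (ι₁ a) = ι₁ (star a))
    (hι₂s : ∀ a, star (ι₂ a) = ι₂ (star a))
    (hι₁inj : Function.Injective ι₁) (hι₂inj : Function.Injective ι₂)
    (hjinj : Function.Injective j)
    (horth : ∀ a b, ι₁ a * ι₂ b = 0)
    (horth' : ∀ a b, ι₂ a * ι₁ b = 0)
    (hone : ι₁ 1 + ι₂ 1 = 1)
    (hjl : ∀ a x, j (M.ls a x) = ι₁ a * j x)
    (hjr : ∀ a x, j (M.rs a x) = j x * ι₂ a)
    (hjj : ∀ x y, j x * star (j y) = ι₁ (M.linn x y))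
    (hjj' : ∀ x y, star (j x) * j y = ι₂ (M.rinn x y))
    (hjz : ∀ x y, j x * j y = 0)
    (hj12 : ∀ a x, ι₂ a * j x = 0)
    (hj21 : ∀ a x, j x * ι₁ a = 0)
    -- L is the linking algebra: every element decomposes as a 2×2 matrix
    (hgen : ∀ l : L, ∃ a b x y, l = ι₁ a + ι₂ b + j x + star (j y))
    (hdec : ∀ a b x y, ι₁ a + ι₂ b + j x + star (j y) = 0 →
      a = 0 ∧ b = 0 ∧ x = 0 ∧ y = 0)
    -- B_X as a subset of L
    (BX : Set L)
    (hBX : BX = {l : L | ∃ a x, l = ι₁ a + ι₂ a + j x + star (j (M.sh x))}) :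
    -- B_X is a C*-subalgebra of L containing the diagonal copy of A
    (1 : L) ∈ BX ∧
    (∀ a : A, ι₁ a + ι₂ a ∈ BX) ∧
    (∀ p ∈ BX, ∀ q ∈ BX, p + q ∈ BX) ∧
    (∀ (c : ℂ), ∀ p ∈ BX, c • p ∈ BX) ∧
    (∀ p ∈ BX, star p ∈ BX) ∧
    (∀ p ∈ BX, ∀ q ∈ BX, p * q ∈ BX) ∧
    IsClosed BX ∧
    -- E_X is well defined and is a conditional expectation onto A
    (∃ EX : L →ₗ[ℂ] L,
      (∀ a x, EX (ι₁ a + ι₂ a + j x + star (j (M.sh x))) = ι₁ a + ι₂ a) ∧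
      (∀ p ∈ BX, EX (EX p) = EX p) ∧
      (∀ a : A, ∀ p ∈ BX, EX ((ι₁ a + ι₂ a) * p) = (ι₁ a + ι₂ a) * EX p) ∧
      (∀ a : A, ∀ p ∈ BX, EX (p * (ι₁ a + ι₂ a)) = EX p * (ι₁ a + ι₂ a)) ∧
      (∀ p ∈ BX, EX (star p) = star (EX p)) ∧
      (∀ p ∈ BX, ∃ c : L, EX (star p * p) = star c * c)) :=
  linking_subalgebra_and_expectation_general M ι₁ ι₂ j hι₁m hι₂m hι₁s hι₂s hι₁inj horth horth' hone
    hjl hjr hjj hjj' hjz hj12 hj21 BX hBX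

end
end

section
/- Let X be an involutive A-A-equivalence bimodule and e = diag(1,0) in the linking algebra L. Then e b e = E_X(b) e for all b ∈ B_X, the map a ↦ diag(a,0) is injective on A, and L is the C*-basic construction of the inclusion A ⊂ B_X with respect to E_X. -/
/-! With `e = diag(1,0)`, for `b = [[a,x],[(x^♯)~,a]]` one has `b e = [[a,0],[(x^♯)~,0]]` and
`e b = [[a,x],[0,0]]`, so `e b e = diag(a,0) = E_X(b) e` and `b₁ e b₂ = (b₁ e)(e b₂)` has entries
`a b`, `a·y`, `(b*·x^♯)~` and `⟨x^♯, y⟩_A`. Setting some of `a, b, x, y` to `0` or `1`, the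
products `b₁ e b₂` exhaust the corners `A ⊕ 0`, `X`, `X̃` and `0 ⊕ ⟨X, X⟩_A` of `L`. The
right inner products span a dense right ideal of the unital Banach algebra `A`; it meets the open
group of units, so it is all of `A`, and `B_X e B_X` spans `L`. -/

noncomputable section

theorem Submodule.mul_mem_span_of_mul_mem {𝕜 R : Type*} [CommSemiring 𝕜] [Semiring R]
    [Algebra 𝕜 R] {s : Set R} (hs : ∀ x ∈ s, ∀ y, x * y ∈ s) {x : R}
    (hx : x ∈ Submodule.span 𝕜 s) (y : R) : x * y ∈ Submodule.span 𝕜 s := by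
  have hmap : Submodule.map (LinearMap.mulRight 𝕜 y) (Submodule.span 𝕜 s) ≤
      Submodule.span 𝕜 s := by
    rw [Submodule.map_span, Submodule.span_le]
    rintro _ ⟨z, hz, rfl⟩
    exact Submodule.subset_span (hs z hz y)
  exact hmap (Submodule.mem_map_of_mem hx)

/-- `p` meets the open set of units, and a right ideal containing a unit contains `1`. -/
theorem Submodule.eq_top_of_dense_of_mul_mem {𝕜 R : Type*} [Semiring 𝕜] [NormedRing R]
    [HasSummableGeomSeries R] [Module 𝕜 R] {p : Submodule 𝕜 R} (hp : Dense (p : Set R))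
    (hmul : ∀ x ∈ p, ∀ y, x * y ∈ p) : p = ⊤ := by
  obtain ⟨_, hup, u, rfl⟩ := hp.exists_mem_open Units.isOpen ⟨1, isUnit_one⟩
  have hone : (1 : R) ∈ p := by simpa using hmul _ hup ↑u⁻¹
  exact eq_top_iff.2 fun y _ => by simpa using hmul 1 hone y

namespace EqvBimod

variable {A X : Type*} [NormedRing A] [StarRing A] [NormedAlgebra ℂ A]
  [NormedAddCommGroup X] [NormedSpace ℂ X] [CompleteSpace X] (M : EqvBimod A X)

theorem ls_zero (x : X) : M.ls 0 x = 0 := by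
  have h := M.ls_add 0 0 x
  rwa [add_zero, left_eq_add] at h

theorem rinn_zero_right (x : X) : M.rinn x 0 = 0 := by
  simpa using M.rinn_smul_right 0 x 0

theorem rinn_zero_left (x : X) : M.rinn 0 x = 0 := by
  rw [← M.rinn_star, rinn_zero_right, star_zero]

theorem span_rinn_eq_top [CompleteSpace A] :
    Submodule.span ℂ {a : A | ∃ x y, a = M.rinn x y} = ⊤ := by
  refine Submodule.eq_top_of_dense_of_mul_mem
    (Submodule.dense_iff_topologicalClosure_eq_top.2 M.rfull)
    fun _ ha => Submodule.mul_mem_span_of_mul_mem ?_ ha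
  rintro _ ⟨x, y, rfl⟩ a
  exact ⟨x, M.rs a y, (M.rinn_rs a x y).symm⟩

end EqvBimod

theorem InvBimod.sh_zero_s13 {A X : Type*} [NormedRing A] [StarRing A] [NormedAlgebra ℂ A]
    [NormedAddCommGroup X] [NormedSpace ℂ X] [CompleteSpace X] (M : InvBimod A X) :
    M.sh 0 = 0 := by
  simpa using M.sh_smul 0 0

/-- Corner embeddings `ι₁ a = [[a,0],[0,0]]`, `ι₂ a = [[0,0],[0,a]]`, `j x = [[0,x],[0,0]]` into
the linking algebra `L = [[A, X], [X̃, A]]` of `X`. -/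
structure LinkingCorners {A X : Type*} [NormedRing A] [StarRing A] [NormedAlgebra ℂ A]
    [NormedAddCommGroup X] [NormedSpace ℂ X] [CompleteSpace X] (M : InvBimod A X)
    (L : Type*) [Ring L] [StarRing L] [Module ℂ L] where
  ι₁ : A →ₗ[ℂ] L
  ι₂ : A →ₗ[ℂ] L
  j : X →ₗ[ℂ] L
  ι₁_mul : ∀ a b, ι₁ (a * b) = ι₁ a * ι₁ b
  star_ι₁ : ∀ a, star (ι₁ a) = ι₁ (star a)
  ι₁_mul_ι₂ : ∀ a b, ι₁ a * ι₂ b = 0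
  ι₂_mul_ι₁ : ∀ a b, ι₂ a * ι₁ b = 0
  j_ls : ∀ a x, j (M.ls a x) = ι₁ a * j x
  j_mul_ι₁ : ∀ a x, j x * ι₁ a = 0
  star_j_mul_j : ∀ x y, star (j x) * j y = ι₂ (M.rinn x y)

namespace LinkingCorners

variable {A X L : Type*} [NormedRing A] [StarRing A] [NormedAlgebra ℂ A]
  [NormedAddCommGroup X] [NormedSpace ℂ X] [CompleteSpace X] {M : InvBimod A X}
  [Ring L] [StarRing L] [Module ℂ L] (P : LinkingCorners M L)

/-- The Jones projection `diag(1, 0)`. -/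
def jones : L := P.ι₁ 1

/-- The element `[[a, x], [(x^♯)~, a]]` of `B_X`. -/
def bx (a : A) (x : X) : L := P.ι₁ a + P.ι₂ a + P.j x + star (P.j (M.sh x))

def BX : Set L := {l | ∃ a x, l = P.bx a x}

theorem star_jones : star P.jones = P.jones := by
  rw [jones, star_ι₁, star_one]

theorem ι₁_mul_jones (a : A) : P.ι₁ a * P.jones = P.ι₁ a := by
  rw [jones, ← P.ι₁_mul, mul_one]

theorem jones_mul_ι₁ (a : A) : P.jones * P.ι₁ a = P.ι₁ a := by
  rw [jones, ← P.ι₁_mul, one_mul]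

theorem ι₂_mul_jones (a : A) : P.ι₂ a * P.jones = 0 :=
  P.ι₂_mul_ι₁ a 1

theorem jones_mul_ι₂ (a : A) : P.jones * P.ι₂ a = 0 :=
  P.ι₁_mul_ι₂ 1 a

theorem j_mul_jones (x : X) : P.j x * P.jones = 0 :=
  P.j_mul_ι₁ 1 x

theorem jones_mul_jones : P.jones * P.jones = P.jones :=
  P.jones_mul_ι₁ 1

theorem jones_mul_j (x : X) : P.jones * P.j x = P.j x := by
  rw [jones, ← P.j_ls, M.ls_one]

theorem star_j_mul_ι₁ (x : X) (a : A) :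
    star (P.j x) * P.ι₁ a = star (P.j (M.ls (star a) x)) := by
  rw [P.j_ls, star_mul, P.star_ι₁, star_star]

theorem star_j_mul_jones (x : X) : star (P.j x) * P.jones = star (P.j x) := by
  rw [jones, star_j_mul_ι₁, star_one, M.ls_one]

theorem jones_mul_star_j (x : X) : P.jones * star (P.j x) = 0 := by
  rw [← P.star_jones, ← star_mul, jones, P.j_mul_ι₁, star_zero]

theorem bx_mul_jones (a : A) (x : X) :
    P.bx a x * P.jones = P.ι₁ a + star (P.j (M.sh x)) := by
  rw [bx, add_mul, add_mul, add_mul, ι₁_mul_jones, ι₂_mul_jones, j_mul_jones, star_j_mul_jones,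
    add_zero, add_zero]

theorem jones_mul_bx (a : A) (x : X) : P.jones * P.bx a x = P.ι₁ a + P.j x := by
  rw [bx, mul_add, mul_add, mul_add, jones_mul_ι₁, jones_mul_ι₂, jones_mul_j, jones_mul_star_j,
    add_zero, add_zero]

theorem add_mul_jones (a : A) : (P.ι₁ a + P.ι₂ a) * P.jones = P.ι₁ a := by
  rw [add_mul, ι₁_mul_jones, ι₂_mul_jones, add_zero]

theorem jones_mul_bx_mul_jones (a : A) (x : X) :
    P.jones * P.bx a x * P.jones = P.ι₁ a := by
  rw [jones_mul_bx, add_mul, ι₁_mul_jones, j_mul_jones, add_zero]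

theorem bx_mul_jones_mul_bx (a b : A) (x y : X) :
    P.bx a x * P.jones * P.bx b y = P.ι₁ (a * b) + P.ι₂ (M.rinn (M.sh x) y) +
      P.j (M.ls a y) + star (P.j (M.ls (star b) (M.sh x))) := by
  rw [← P.jones_mul_jones, ← mul_assoc, mul_assoc (P.bx a x * P.jones), bx_mul_jones, jones_mul_bx,
    add_mul, mul_add, mul_add, ← P.ι₁_mul, ← P.j_ls, star_j_mul_ι₁, star_j_mul_j]
  abel

/-- The right inner products span all of `A`, not only a dense subspace. -/
theorem span_bx_mul_jones_mul_bx [CompleteSpace A]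
    (hgen : ∀ l : L, ∃ a b x y, l = P.ι₁ a + P.ι₂ b + P.j x + star (P.j y)) :
    Submodule.span ℂ {l : L | ∃ b₁ ∈ P.BX, ∃ b₂ ∈ P.BX, l = b₁ * P.jones * b₂} = ⊤ := by
  set S := Submodule.span ℂ {l : L | ∃ b₁ ∈ P.BX, ∃ b₂ ∈ P.BX, l = b₁ * P.jones * b₂}
  have mem (a b : A) (x y : X) : P.bx a x * P.jones * P.bx b y ∈ S :=
    Submodule.subset_span ⟨_, ⟨a, x, rfl⟩, _, ⟨b, y, rfl⟩, rfl⟩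
  have hι₁ (a : A) : P.ι₁ a ∈ S := by
    simpa [bx_mul_jones_mul_bx, M.sh_zero_s13, M.rinn_zero_right, M.ls_zero] using mem a 1 0 0
  have hj (x : X) : P.j x ∈ S := by
    simpa [bx_mul_jones_mul_bx, M.sh_zero_s13, M.rinn_zero_left, M.ls_zero, M.ls_one] using
      mem 1 0 0 x
  have hstar_j (x : X) : star (P.j x) ∈ S := by
    simpa [bx_mul_jones_mul_bx, M.sh_sh, M.rinn_zero_right, M.ls_zero, M.ls_one] using
      mem 0 1 (M.sh x) 0
  have hι₂ : Submodule.map P.ι₂ (Submodule.span ℂ {a : A | ∃ x y, a = M.rinn x y}) ≤ S := by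
    rw [Submodule.map_span, Submodule.span_le]
    rintro _ ⟨_, ⟨x, y, rfl⟩, rfl⟩
    simpa [bx_mul_jones_mul_bx, M.sh_sh, M.ls_zero] using mem 0 0 (M.sh x) y
  rw [M.span_rinn_eq_top] at hι₂
  refine eq_top_iff.2 fun l _ => ?_
  obtain ⟨a, b, x, y, rfl⟩ := hgen l
  exact add_mem (add_mem (add_mem (hι₁ a) (hι₂ ⟨b, trivial, rfl⟩)) (hj x)) (hstar_j y)

end LinkingCorners

theorem linking_is_basic_construction_general
    {A X L : Type*} [NormedRing A] [StarRing A] [NormedAlgebra ℂ A]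
    [CompleteSpace A]
    [NormedAddCommGroup X] [NormedSpace ℂ X] [CompleteSpace X]
    [NormedRing L] [StarRing L] [NormedAlgebra ℂ L]
    (M : InvBimod A X)
    -- the linking algebra L of X: corner embeddings ι₁, ι₂ of A and j of X
    (ι₁ ι₂ : A →ₗ[ℂ] L) (j : X →ₗ[ℂ] L)
    (hι₁m : ∀ a b, ι₁ (a * b) = ι₁ a * ι₁ b)
    (hι₁s : ∀ a, star (ι₁ a) = ι₁ (star a))
    (hι₁inj : Function.Injective ι₁)
    (horth : ∀ a b, ι₁ a * ι₂ b = 0)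
    (horth' : ∀ a b, ι₂ a * ι₁ b = 0)
    (hjl : ∀ a x, j (M.ls a x) = ι₁ a * j x)
    (hjj' : ∀ x y, star (j x) * j y = ι₂ (M.rinn x y))
    (hj21 : ∀ a x, j x * ι₁ a = 0)
    -- L is the linking algebra: every element decomposes as a 2×2 matrix
    (hgen : ∀ l : L, ∃ a b x y, l = ι₁ a + ι₂ b + j x + star (j y))
    (EX : L →ₗ[ℂ] L)
    (hEX : ∀ a x, EX (ι₁ a + ι₂ a + j x + star (j (M.sh x))) = ι₁ a + ι₂ a)
    (BX : Set L)
    (hBX : BX = {l : L | ∃ a x, l = ι₁ a + ι₂ a + j x + star (j (M.sh x))})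
    (e : L) (he : e = ι₁ 1) :
    -- e is a projection
    star e = e ∧ e * e = e ∧
    -- e b e = E_X(b) e for b ∈ B_X
    (∀ b ∈ BX, e * b * e = EX b * e) ∧
    -- a ↦ diag(a,0) = (ι₁ a + ι₂ a) e is injective
    Function.Injective (fun a : A => (ι₁ a + ι₂ a) * e) ∧
    -- L is generated by B_X and e: it is the C*-basic construction of A ⊂ B_X
    (Submodule.span ℂ {l : L | ∃ b₁ ∈ BX, ∃ b₂ ∈ BX, l = b₁ * e * b₂}).topologicalClosure
      = ⊤ := by
  subst hBX he
  let P : LinkingCorners M L := ⟨ι₁, ι₂, j, hι₁m, hι₁s, horth, horth', hjl, hj21, hjj'⟩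
  refine ⟨P.star_jones, P.jones_mul_jones, ?_, fun a a' h => hι₁inj ?_, ?_⟩
  · rintro _ ⟨a, x, rfl⟩
    rw [hEX]
    exact (P.jones_mul_bx_mul_jones a x).trans (P.add_mul_jones a).symm
  · exact (P.add_mul_jones a).symm.trans (h.trans (P.add_mul_jones a'))
  · exact top_unique ((P.span_bx_mul_jones_mul_bx hgen).ge.trans
      (Submodule.le_topologicalClosure _))

/-- with `e = diag(1,0)` in the linking algebra `L`, one has
`e b e = E_X(b) e` for all `b ∈ B_X`, the map `a ↦ diag(a,0)` is injective, and `L`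
is the C*-basic construction of `A ⊂ B_X` with respect to `E_X` (it is generated by
`B_X` and the Jones projection `e`). -/
theorem linking_is_basic_construction
    {A X L : Type*} [NormedRing A] [StarRing A] [CStarRing A] [NormedAlgebra ℂ A]
    [StarModule ℂ A] [CompleteSpace A]
    [NormedAddCommGroup X] [NormedSpace ℂ X] [CompleteSpace X]
    [NormedRing L] [StarRing L] [CStarRing L] [NormedAlgebra ℂ L]
    [StarModule ℂ L] [CompleteSpace L]
    (M : InvBimod A X)
    -- the linking algebra L of X: corner embeddings ι₁, ι₂ of A and j of X
    (ι₁ ι₂ : A →ₗ[ℂ] L) (j : X →ₗ[ℂ] L)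
    (hι₁m : ∀ a b, ι₁ (a * b) = ι₁ a * ι₁ b)
    (hι₂m : ∀ a b, ι₂ (a * b) = ι₂ a * ι₂ b)
    (hι₁s : ∀ a, star (ι₁ a) = ι₁ (star a))
    (hι₂s : ∀ a, star (ι₂ a) = ι₂ (star a))
    (hι₁inj : Function.Injective ι₁) (hι₂inj : Function.Injective ι₂)
    (hjinj : Function.Injective j)
    (horth : ∀ a b, ι₁ a * ι₂ b = 0)
    (horth' : ∀ a b, ι₂ a * ι₁ b = 0)
    (hone : ι₁ 1 + ι₂ 1 = 1)
    (hjl : ∀ a x, j (M.ls a x) = ι₁ a * j x)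
    (hjr : ∀ a x, j (M.rs a x) = j x * ι₂ a)
    (hjj : ∀ x y, j x * star (j y) = ι₁ (M.linn x y))
    (hjj' : ∀ x y, star (j x) * j y = ι₂ (M.rinn x y))
    (hjz : ∀ x y, j x * j y = 0)
    (hj12 : ∀ a x, ι₂ a * j x = 0)
    (hj21 : ∀ a x, j x * ι₁ a = 0)
    -- L is the linking algebra: every element decomposes as a 2×2 matrix
    (hgen : ∀ l : L, ∃ a b x y, l = ι₁ a + ι₂ b + j x + star (j y))
    (hdec : ∀ a b x y, ι₁ a + ι₂ b + j x + star (j y) = 0 →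
      a = 0 ∧ b = 0 ∧ x = 0 ∧ y = 0)
    (EX : L →ₗ[ℂ] L)
    (hEX : ∀ a x, EX (ι₁ a + ι₂ a + j x + star (j (M.sh x))) = ι₁ a + ι₂ a)
    (BX : Set L)
    (hBX : BX = {l : L | ∃ a x, l = ι₁ a + ι₂ a + j x + star (j (M.sh x))})
    (e : L) (he : e = ι₁ 1) :
    -- e is a projection
    star e = e ∧ e * e = e ∧
    -- e b e = E_X(b) e for b ∈ B_X
    (∀ b ∈ BX, e * b * e = EX b * e) ∧
    -- a ↦ diag(a,0) = (ι₁ a + ι₂ a) e is injective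
    Function.Injective (fun a : A => (ι₁ a + ι₂ a) * e) ∧
    -- L is generated by B_X and e: it is the C*-basic construction of A ⊂ B_X
    (Submodule.span ℂ {l : L | ∃ b₁ ∈ BX, ∃ b₂ ∈ BX, l = b₁ * e * b₂}).topologicalClosure
      = ⊤ :=
  linking_is_basic_construction_general M ι₁ ι₂ j hι₁m hι₁s hι₁inj horth horth' hjl hjj' hj21 hgen
    EX hEX BX hBX e he

end
end

section
/- Let E : B → A have Index E = 2 and let B₋ = { b ∈ B : E(b) = 0 } = { b ∈ B : β(b) = −b }. Then B₋, with the A-A-bimodule structure inherited from B, inner products _A⟨x,y⟩ = E(xy*), ⟨x,y⟩_A = E(x*y), and involution x^♯ = x*, is an involutive A-A-equivalence bimodule, and B₋ is isomorphic to X_B = e_A C*⟨B,e_A⟩(1−e_A) as involutive A-A-equivalence bimodules. -/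
/- Watatani-style conditional expectations, quasi-bases, and the C*-basic
construction, formalized abstractly. -/

noncomputable section

/-- A conditional expectation of a unital C*-algebra `B` onto a C*-subalgebra `A`. -/
structure CondExp (B : Type*) [NormedRing B] [StarRing B] [NormedAlgebra ℂ B] [StarModule ℂ B]
    (A : StarSubalgebra ℂ B) where
  toFun : B →ₗ[ℂ] B
  mem_range : ∀ b, toFun b ∈ A
  fixes : ∀ a ∈ A, toFun a = a
  left_mod : ∀ a ∈ A, ∀ b, toFun (a * b) = a * toFun b
  right_mod : ∀ a ∈ A, ∀ b, toFun (b * a) = toFun b * a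
  star_map : ∀ b, toFun (star b) = star (toFun b)
  pos : ∀ b, ∃ c, toFun (star b * b) = star c * c

/-- `x` is a quasi-basis for the conditional expectation `E` (with pairs `(x i, (x i)*)`). -/
def IsQuasiBasis {B : Type*} [NormedRing B] [StarRing B] [NormedAlgebra ℂ B] [StarModule ℂ B]
    {A : StarSubalgebra ℂ B} (E : CondExp B A) {n : ℕ} (x : Fin n → B) : Prop :=
  (∀ b, ∑ i, x i * E.toFun (star (x i) * b) = b) ∧
  (∀ b, ∑ i, E.toFun (b * x i) * star (x i) = b)

/-- The C*-basic construction `C = C*⟨B, e_A⟩` of a conditional expectation `E : B → A`,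
with Jones projection `e`. -/
structure BasicConstruction {B : Type*} [NormedRing B] [StarRing B] [NormedAlgebra ℂ B] [StarModule ℂ B]
    {A : StarSubalgebra ℂ B} (E : CondExp B A)
    (C : Type*) [NormedRing C] [StarRing C] [NormedAlgebra ℂ C] [StarModule ℂ C] where
  ι : B →⋆ₐ[ℂ] C
  inj : Function.Injective ι
  e : C
  e_star : star e = e
  e_idem : e * e = e
  jones : ∀ b, e * ι b * e = ι (E.toFun b) * e
  dense : (Submodule.span ℂ {y : C | ∃ b c : B, y = ι b * e * ι c}).topologicalClosure = ⊤
  mul_e_inj : ∀ b : B, ι b * e = 0 → b = 0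

/-!
The automorphism of `C*⟨B, e⟩` fixing `B` and exchanging `e` and `1 - e` makes `1 - e` a second
Jones projection. For `p, q ∈ B₋`, compressing `ι(pq) = ι p e ι q + ι p (1 - e) ι q` by `1 - e`
and by `e` gives `ι p e ι q = ι(E(pq)) (1 - e)` and `ι p (1 - e) ι q = ι(E(pq)) e`, so
`E(pq) = pq`. Hence `β = 2E - id` is a *-automorphism, `E = (id + β)/2` is continuous and `A` is
closed; `a ↦ ι(a) e` is then an injective *-homomorphism on the C*-algebra `A`, hence isometric,
and so is `p ↦ e ι(p)` on `B₋`. Thus `b ↦ e ι(b)` is bounded below, its range is closed and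
contains `e ι(b) e ι(c) = e ι(E(b) c)`, so it is all of `e C`. The corner `e C (1 - e)` is
`{e ι(p) : p ∈ B₋}`, and `e ι(p) ↦ p` transports the bimodule structure, the inner products and
the involution by the two Jones relations. For fullness, `pᵢ = xᵢ - E(xᵢ)` satisfy
`∑ pᵢ pᵢ* = 2 - 1 - 1 + 1 = 1`.
-/

theorem mul_mul_eq_one_sub_mul_mul_one_sub {R : Type*} [Ring R] {e u v : R}
    (hu : e * u * e = 0) (hu' : (1 - e) * u * (1 - e) = 0) (hv : e * v * e = 0) :
    u * e * v = (1 - e) * (u * v) * (1 - e) := by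
  have hue : (1 - e) * u * e = u * e := by rw [sub_mul, sub_mul, one_mul, hu, sub_zero]
  have huev : u * e * v * e = 0 := by simp only [mul_assoc] at hv ⊢; rw [hv, mul_zero]
  calc u * e * v = u * e * v - u * e * v * e := by rw [huev, sub_zero]
    _ = (1 - e) * u * e * v * (1 - e) + (1 - e) * u * (1 - e) * v * (1 - e) := by
      rw [hu', hue]; noncomm_ring
    _ = (1 - e) * (u * v) * (1 - e) := by noncomm_ring

section Algebra

variable {B C : Type*} [NormedRing B] [StarRing B] [NormedAlgebra ℂ B] [StarModule ℂ B]
  [NormedRing C] [StarRing C] [NormedAlgebra ℂ C] [StarModule ℂ C]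
  {A : StarSubalgebra ℂ B} {E : CondExp B A}

namespace CondExp

theorem toFun_toFun (b : B) : E.toFun (E.toFun b) = E.toFun b :=
  E.fixes _ (E.mem_range b)

theorem toFun_sub_toFun (b : B) : E.toFun (b - E.toFun b) = 0 := by
  rw [map_sub, toFun_toFun, sub_self]

theorem toFun_star_eq_zero {b : B} (hb : E.toFun b = 0) :
    E.toFun (star b) = 0 := by
  rw [E.star_map, hb, star_zero]

theorem two_mul_toFun_sub_eq_neg_iff (b : B) :
    2 * E.toFun b - b = -b ↔ E.toFun b = 0 := by
  rw [sub_eq_neg_self, two_mul, ← two_smul ℂ, smul_eq_zero]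
  simp

theorem toFun_mul_left_eq_zero {a p : B} (ha : a ∈ A) (hp : E.toFun p = 0) :
    E.toFun (a * p) = 0 := by
  rw [E.left_mod a ha, hp, mul_zero]

theorem toFun_mul_right_eq_zero {a p : B} (ha : a ∈ A) (hp : E.toFun p = 0) :
    E.toFun (p * a) = 0 := by
  rw [E.right_mod a ha, hp, zero_mul]

theorem sum_sub_toFun_mul_star {n : ℕ} {x : Fin n → B} (hx : IsQuasiBasis E x)
    (hidx : ∑ i, x i * star (x i) = 2) :
    ∑ i, (x i - E.toFun (x i)) * star (x i - E.toFun (x i)) = 1 := by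
  have h₁ : ∑ i, E.toFun (x i) * star (x i) = 1 := by simpa only [one_mul] using hx.2 1
  have h₂ : ∑ i, x i * star (E.toFun (x i)) = 1 := by
    simpa only [star_sum, star_mul, star_star, star_one] using congrArg star h₁
  have h₃ : ∑ i, E.toFun (x i) * star (E.toFun (x i)) = 1 := by
    simpa only [map_sum, E.left_mod _ (E.mem_range _), E.star_map, E.fixes 1 (one_mem A)]
      using congrArg E.toFun h₁
  calc ∑ i, (x i - E.toFun (x i)) * star (x i - E.toFun (x i))
      = ∑ i, (x i * star (x i) - x i * star (E.toFun (x i)) - E.toFun (x i) * star (x i)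
          + E.toFun (x i) * star (E.toFun (x i))) := by
        simp only [star_sub]; congr 1; ext i; noncomm_ring
    _ = 1 := by
      rw [Finset.sum_add_distrib, Finset.sum_sub_distrib, Finset.sum_sub_distrib, hidx, h₁, h₂,
        h₃]
      norm_num

variable (hker : ∀ p q, E.toFun p = 0 → E.toFun q = 0 → E.toFun (p * q) = p * q)
include hker

theorem toFun_mul (b c : B) :
    E.toFun (b * c) = E.toFun b * E.toFun c + (b - E.toFun b) * (c - E.toFun c) := by
  have hsplit : b * c = E.toFun b * E.toFun c + E.toFun b * (c - E.toFun c)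
      + (b - E.toFun b) * E.toFun c + (b - E.toFun b) * (c - E.toFun c) := by
    noncomm_ring
  rw [hsplit, map_add, map_add, map_add, E.fixes _ (mul_mem (E.mem_range b) (E.mem_range c)),
    E.left_mod _ (E.mem_range b), E.right_mod _ (E.mem_range c),
    hker _ _ (E.toFun_sub_toFun b) (E.toFun_sub_toFun c)]
  simp only [toFun_sub_toFun, mul_zero, zero_mul, add_zero]

/-- The automorphism `β = 2E - id`. -/
def reflection : B ≃⋆ₐ[ℂ] B where
  toFun b := E.toFun b + E.toFun b - b
  invFun b := E.toFun b + E.toFun b - b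
  left_inv b := by simp only [map_sub, map_add, toFun_toFun]; abel
  right_inv b := by simp only [map_sub, map_add, toFun_toFun]; abel
  map_add' b c := by simp only [map_add]; abel
  map_mul' b c := by
    simp only [toFun_mul hker b c]
    noncomm_ring
  map_smul' r b := by simp only [map_smul]; module
  map_star' b := by simp only [E.star_map, star_sub, star_add]

end CondExp

namespace BasicConstruction

variable (bc : BasicConstruction E C)

/-- What index `2` provides, through the automorphism of `C` fixing `B` and exchanging `e` and
`1 - e`. -/
def ComplIsJones : Prop :=
  ∀ b, (1 - bc.e) * bc.ι b * (1 - bc.e) = bc.ι (E.toFun b) * (1 - bc.e)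

variable {bc}

theorem complIsJones_of_starAlgEquiv (Φ : C ≃⋆ₐ[ℂ] C) (hΦB : ∀ b : B, Φ (bc.ι b) = bc.ι b)
    (hΦe : Φ bc.e = 1 - bc.e) : bc.ComplIsJones := fun b => by
  simpa only [map_mul, hΦB, hΦe] using congrArg Φ (bc.jones b)

theorem e_mul_ι_mul_e_of_ker {p : B} (hp : E.toFun p = 0) : bc.e * bc.ι p * bc.e = 0 := by
  rw [bc.jones, hp, map_zero, zero_mul]

theorem e_mul_ι_mul_star_e_mul_ι (p q : B) :
    bc.e * bc.ι p * star (bc.e * bc.ι q) = bc.ι (E.toFun (p * star q)) * bc.e := by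
  rw [star_mul, bc.e_star, ← map_star, ← bc.jones, map_mul]
  noncomm_ring

variable (hc : bc.ComplIsJones)
include hc

theorem one_sub_e_mul_ι_mul_one_sub_e_of_ker {p : B} (hp : E.toFun p = 0) :
    (1 - bc.e) * bc.ι p * (1 - bc.e) = 0 := by
  rw [hc, hp, map_zero, zero_mul]

theorem e_mul_ι_comm {a : B} (ha : a ∈ A) : bc.e * bc.ι a = bc.ι a * bc.e := by
  have hcompl := hc a
  have hjones := bc.jones a
  rw [E.fixes a ha] at hcompl hjones
  calc bc.e * bc.ι a
      = bc.e * bc.ι a * bc.e - ((1 - bc.e) * bc.ι a * (1 - bc.e) - bc.ι a * (1 - bc.e)) := by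
        noncomm_ring
    _ = bc.ι a * bc.e := by rw [hcompl, sub_self, sub_zero, hjones]

theorem ι_mul_e_mul_ι_of_ker {p q : B} (hp : E.toFun p = 0) (hq : E.toFun q = 0) :
    bc.ι p * bc.e * bc.ι q = bc.ι (E.toFun (p * q)) * (1 - bc.e) := by
  rw [mul_mul_eq_one_sub_mul_mul_one_sub (e_mul_ι_mul_e_of_ker hp)
    (one_sub_e_mul_ι_mul_one_sub_e_of_ker hc hp) (e_mul_ι_mul_e_of_ker hq), ← map_mul, hc]

theorem ι_mul_one_sub_e_mul_ι_of_ker {p q : B} (hp : E.toFun p = 0) (hq : E.toFun q = 0) :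
    bc.ι p * (1 - bc.e) * bc.ι q = bc.ι (E.toFun (p * q)) * bc.e := by
  have h := mul_mul_eq_one_sub_mul_mul_one_sub (one_sub_e_mul_ι_mul_one_sub_e_of_ker hc hp)
    (by rwa [sub_sub_cancel, e_mul_ι_mul_e_of_ker]) (one_sub_e_mul_ι_mul_one_sub_e_of_ker hc hq)
  rw [h, sub_sub_cancel, ← map_mul, bc.jones]

theorem star_e_mul_ι_mul_e_mul_ι {p q : B} (hp : E.toFun p = 0) (hq : E.toFun q = 0) :
    star (bc.e * bc.ι p) * (bc.e * bc.ι q) = bc.ι (E.toFun (star p * q)) * (1 - bc.e) := by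
  rw [← ι_mul_e_mul_ι_of_ker hc (E.toFun_star_eq_zero hp) hq, star_mul, bc.e_star, ← map_star,
    mul_assoc, ← mul_assoc bc.e, bc.e_idem, mul_assoc]

theorem toFun_mul_of_ker {p q : B} (hp : E.toFun p = 0) (hq : E.toFun q = 0) :
    E.toFun (p * q) = p * q := by
  refine bc.inj ?_
  calc bc.ι (E.toFun (p * q))
      = bc.ι (E.toFun (p * q)) * (1 - bc.e) + bc.ι (E.toFun (p * q)) * bc.e := by noncomm_ring
    _ = bc.ι p * bc.e * bc.ι q + bc.ι p * (1 - bc.e) * bc.ι q := by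
      rw [ι_mul_e_mul_ι_of_ker hc hp hq, ι_mul_one_sub_e_mul_ι_of_ker hc hp hq]
    _ = bc.ι (p * q) := by rw [map_mul]; noncomm_ring

variable {n : ℕ} {x : Fin n → B} (hx : IsQuasiBasis E x) (hidx : ∑ i, x i * star (x i) = 2)
include hx hidx

theorem span_toFun_mul_star_of_ker :
    Submodule.span ℂ {a | ∃ p, E.toFun p = 0 ∧ ∃ q, E.toFun q = 0 ∧ a = E.toFun (p * star q)}
      = Subalgebra.toSubmodule A.toSubalgebra := by
  refine le_antisymm (Submodule.span_le.mpr ?_) fun a ha => ?_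
  · rintro _ ⟨p, -, q, -, rfl⟩
    exact E.mem_range _
  · have hp : ∀ i, E.toFun (x i - E.toFun (x i)) = 0 := fun i => E.toFun_sub_toFun (x i)
    have ha' : a = ∑ i, E.toFun (a * (x i - E.toFun (x i)) * star (x i - E.toFun (x i))) :=
      calc a = a * ∑ i, (x i - E.toFun (x i)) * star (x i - E.toFun (x i)) := by
            rw [E.sum_sub_toFun_mul_star hx hidx, mul_one]
        _ = _ := by
          rw [Finset.mul_sum]
          refine Finset.sum_congr rfl fun i _ => ?_
          rw [toFun_mul_of_ker hc (E.toFun_mul_left_eq_zero ha (hp i))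
            (E.toFun_star_eq_zero (hp i)), mul_assoc]
    rw [ha']
    exact Submodule.sum_mem _ fun i _ => Submodule.subset_span
      ⟨_, E.toFun_mul_left_eq_zero ha (hp i), _, hp i, rfl⟩

theorem span_toFun_star_mul_of_ker :
    Submodule.span ℂ {a | ∃ p, E.toFun p = 0 ∧ ∃ q, E.toFun q = 0 ∧ a = E.toFun (star p * q)}
      = Subalgebra.toSubmodule A.toSubalgebra := by
  convert span_toFun_mul_star_of_ker hc hx hidx using 3
  ext a
  constructor <;> rintro ⟨p, hp, q, hq, rfl⟩
  · exact ⟨star p, E.toFun_star_eq_zero hp, star q, E.toFun_star_eq_zero hq, by rw [star_star]⟩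
  · exact ⟨star p, E.toFun_star_eq_zero hp, star q, E.toFun_star_eq_zero hq, by rw [star_star]⟩

end BasicConstruction

end Algebra

section Analysis

variable {B C : Type*} [CStarAlgebra B] [CStarAlgebra C] {A : StarSubalgebra ℂ B}

namespace CondExp

variable {E : CondExp B A} (hker : ∀ p q, E.toFun p = 0 → E.toFun q = 0 → E.toFun (p * q) = p * q)
include hker

theorem continuous_toFun : Continuous E.toFun := by
  have hE : ⇑E.toFun = fun b => (2⁻¹ : ℂ) • (b + reflection hker b) := by
    funext b
    change E.toFun b = (2⁻¹ : ℂ) • (b + (E.toFun b + E.toFun b - b))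
    module
  rw [hE]
  exact (continuous_id.add (StarAlgEquiv.isometry _).continuous).const_smul _

theorem isClosed_subalgebra : IsClosed (A : Set B) := by
  have hA : (A : Set B) = {b | E.toFun b = b} :=
    Set.ext fun b => ⟨E.fixes b, fun hb => hb ▸ E.mem_range b⟩
  rw [hA]
  exact isClosed_eq (continuous_toFun hker) continuous_id

end CondExp

namespace BasicConstruction

variable {E : CondExp B A} {bc : BasicConstruction E C}

theorem norm_e_le_one : ‖bc.e‖ ≤ 1 := IsStarProjection.norm_le bc.e ⟨bc.e_idem, bc.e_star⟩

theorem uniformContinuous_e_mul_ι : UniformContinuous fun b => bc.e * bc.ι b :=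
  AddMonoidHomClass.uniformContinuous_of_bound (LinearMap.mulLeft ℂ bc.e ∘ₗ bc.ι.toLinearMap) 1
    fun b => calc ‖bc.e * bc.ι b‖ ≤ ‖bc.e‖ * ‖bc.ι b‖ := norm_mul_le _ _
      _ ≤ 1 * ‖b‖ := mul_le_mul norm_e_le_one (NonUnitalStarAlgHom.norm_apply_le bc.ι b)
        (norm_nonneg _) zero_le_one

variable (hc : bc.ComplIsJones)
include hc

theorem norm_ι_mul_e {a : B} (ha : a ∈ A) : ‖bc.ι a * bc.e‖ = ‖a‖ := by
  have : IsClosed (A : Set B) :=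
    CondExp.isClosed_subalgebra fun _ _ hp hq => toFun_mul_of_ker hc hp hq
  let ψ : A →⋆ₙₐ[ℂ] C :=
    { toFun := fun a => bc.ι a * bc.e
      map_smul' := fun c a => by
        simp only [SetLike.val_smul, map_smul, smul_mul_assoc, MonoidHom.id_apply]
      map_zero' := by simp
      map_add' := fun a b => by simp only [AddMemClass.coe_add, map_add, add_mul]
      map_mul' := fun a b => by
        rw [MulMemClass.coe_mul, map_mul, mul_assoc (bc.ι a) bc.e, ← mul_assoc bc.e,
          e_mul_ι_comm hc b.2]
        simp only [mul_assoc, bc.e_idem]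
      map_star' := fun a => by
        rw [StarMemClass.coe_star, star_mul, bc.e_star, ← e_mul_ι_comm hc (star_mem a.2),
          map_star] }
  have hψ : Function.Injective ψ := fun a b h => Subtype.ext <| sub_eq_zero.mp <|
    bc.mul_e_inj _ (by rw [map_sub, sub_mul]; exact sub_eq_zero.mpr h)
  exact NonUnitalStarAlgHom.norm_map ψ hψ ⟨a, ha⟩

theorem norm_e_mul_ι_of_ker {p : B} (hp : E.toFun p = 0) : ‖bc.e * bc.ι p‖ = ‖p‖ := by
  have hpp : E.toFun (p * star p) = p * star p :=
    toFun_mul_of_ker hc hp (E.toFun_star_eq_zero hp)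
  have hsq : bc.e * bc.ι p * star (bc.e * bc.ι p) = bc.ι (p * star p) * bc.e := by
    rw [star_mul, bc.e_star, ← map_star, ← hpp, ← bc.jones, map_mul]; noncomm_ring
  have h := norm_ι_mul_e hc (hpp ▸ E.mem_range (p * star p))
  rw [← hsq, CStarRing.norm_self_mul_star, CStarRing.norm_self_mul_star] at h
  exact (mul_self_inj (norm_nonneg _) (norm_nonneg _)).mp h

theorem norm_le_three_mul_norm_e_mul_ι (b : B) : ‖b‖ ≤ 3 * ‖bc.e * bc.ι b‖ := by
  have hcompress : ‖bc.e * bc.ι b * bc.e‖ ≤ ‖bc.e * bc.ι b‖ :=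
    (norm_mul_le _ _).trans (mul_le_of_le_one_right (norm_nonneg _) norm_e_le_one)
  have hA : ‖E.toFun b‖ ≤ ‖bc.e * bc.ι b‖ := by
    rwa [bc.jones, norm_ι_mul_e hc (E.mem_range b)] at hcompress
  have hsub : ‖b - E.toFun b‖ ≤ 2 * ‖bc.e * bc.ι b‖ := by
    rw [← norm_e_mul_ι_of_ker hc (E.toFun_sub_toFun b), map_sub, mul_sub,
      e_mul_ι_comm hc (E.mem_range b), ← bc.jones]
    linarith [norm_sub_le (bc.e * bc.ι b) (bc.e * bc.ι b * bc.e)]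
  calc ‖b‖ = ‖E.toFun b + (b - E.toFun b)‖ := by rw [add_sub_cancel]
    _ ≤ 3 * ‖bc.e * bc.ι b‖ := by linarith [norm_add_le (E.toFun b) (b - E.toFun b)]

theorem antilipschitz_e_mul_ι : AntilipschitzWith 3 fun b => bc.e * bc.ι b :=
  AddMonoidHomClass.antilipschitz_of_bound (LinearMap.mulLeft ℂ bc.e ∘ₗ bc.ι.toLinearMap)
    (by exact_mod_cast norm_le_three_mul_norm_e_mul_ι hc)

theorem e_mul_ι_injective : Function.Injective fun b => bc.e * bc.ι b :=
  (antilipschitz_e_mul_ι hc).injective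

theorem exists_e_mul_eq_e_mul_ι (y : C) : ∃ b, bc.e * y = bc.e * bc.ι b := by
  let S := (LinearMap.range (LinearMap.mulLeft ℂ bc.e ∘ₗ bc.ι.toLinearMap)).comap
    (LinearMap.mulLeft ℂ bc.e)
  have hS : IsClosed (S : Set C) :=
    ((antilipschitz_e_mul_ι hc).isClosed_range uniformContinuous_e_mul_ι).preimage
      (continuous_const_mul bc.e)
  have hgen : {y | ∃ b c : B, y = bc.ι b * bc.e * bc.ι c} ⊆ S := by
    rintro _ ⟨b, c, rfl⟩
    refine ⟨E.toFun b * c, ?_⟩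
    change bc.e * bc.ι (E.toFun b * c) = bc.e * (bc.ι b * bc.e * bc.ι c)
    rw [← mul_assoc, ← mul_assoc, bc.jones, map_mul, ← mul_assoc, e_mul_ι_comm hc (E.mem_range b)]
  have hy : y ∈ S := Submodule.topologicalClosure_minimal _ (Submodule.span_le.mpr hgen) hS
    (bc.dense ▸ Submodule.mem_top)
  obtain ⟨b, hb⟩ := hy
  exact ⟨b, hb.symm⟩

variable {f : C → B} (hf : ∀ y, bc.e * y = bc.e * bc.ι (f y))
include hf

theorem apply_eq_of_e_mul_eq {y : C} {b : B} (h : bc.e * y = bc.e * bc.ι b) : f y = b :=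
  e_mul_ι_injective hc ((hf y).symm.trans h)

theorem apply_add (y z : C) : f (y + z) = f y + f z :=
  apply_eq_of_e_mul_eq hc hf (by rw [mul_add, hf y, hf z, map_add, mul_add])

theorem apply_smul (c : ℂ) (y : C) : f (c • y) = c • f y :=
  apply_eq_of_e_mul_eq hc hf (by rw [mul_smul_comm, hf y, map_smul, mul_smul_comm])

theorem apply_ι_mul {a : B} (ha : a ∈ A) (y : C) : f (bc.ι a * y) = a * f y :=
  apply_eq_of_e_mul_eq hc hf (by
    rw [← mul_assoc, e_mul_ι_comm hc ha, mul_assoc, hf y, ← mul_assoc, ← e_mul_ι_comm hc ha,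
      mul_assoc, ← map_mul])

theorem apply_mul_ι (y : C) (b : B) : f (y * bc.ι b) = f y * b :=
  apply_eq_of_e_mul_eq hc hf (by rw [← mul_assoc, hf y, mul_assoc, ← map_mul])

theorem apply_e_mul_ι (p : B) : f (bc.e * bc.ι p) = p :=
  apply_eq_of_e_mul_eq hc hf (by rw [← mul_assoc, bc.e_idem])

theorem apply_ι_mul_one_sub_e {p : B} (hp : E.toFun p = 0) : f (bc.ι p * (1 - bc.e)) = p :=
  apply_eq_of_e_mul_eq hc hf (by
    rw [← mul_assoc, mul_sub, mul_one, e_mul_ι_mul_e_of_ker hp, sub_zero])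

theorem mem_corner_iff {y : C} :
    bc.e * y * (1 - bc.e) = y ↔ ∃ p, E.toFun p = 0 ∧ y = bc.e * bc.ι p := by
  constructor
  · intro hy
    refine ⟨f y - E.toFun (f y), E.toFun_sub_toFun _, ?_⟩
    calc y = bc.e * y * (1 - bc.e) := hy.symm
      _ = _ := by
        rw [hf y, map_sub, mul_sub, mul_sub, mul_one, e_mul_ι_comm hc (E.mem_range _), bc.jones]
  · rintro ⟨p, hp, rfl⟩
    rw [← mul_assoc, bc.e_idem, mul_sub, mul_one, e_mul_ι_mul_e_of_ker hp, sub_zero]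

theorem bijOn_sub_toFun :
    Set.BijOn (fun y => f y - E.toFun (f y)) {y | bc.e * y * (1 - bc.e) = y}
      {b | E.toFun b = 0} := by
  refine ⟨fun y _ => E.toFun_sub_toFun (f y), ?_, fun p (hp : E.toFun p = 0) => ?_⟩
  · rintro _ hy _ hz h
    obtain ⟨p, hp, rfl⟩ := (mem_corner_iff hc hf).mp hy
    obtain ⟨q, hq, rfl⟩ := (mem_corner_iff hc hf).mp hz
    simpa only [apply_e_mul_ι hc hf, hp, hq, sub_zero] using congrArg (bc.e * bc.ι ·) h
  · exact ⟨bc.e * bc.ι p, (mem_corner_iff hc hf).mpr ⟨p, hp, rfl⟩,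
      by simp only [apply_e_mul_ι hc hf, hp, sub_zero]⟩

end BasicConstruction

end Analysis

theorem Bminus_involutive_bimodule_iso_corner_general
    {B C : Type*} [NormedRing B] [StarRing B] [CStarRing B] [NormedAlgebra ℂ B]
    [StarModule ℂ B] [CompleteSpace B]
    [NormedRing C] [StarRing C] [CStarRing C] [NormedAlgebra ℂ C]
    [StarModule ℂ C] [CompleteSpace C]
    {A : StarSubalgebra ℂ B} (E : CondExp B A)
    {n : ℕ} (x : Fin n → B) (hx : IsQuasiBasis E x)
    (hidx : ∑ i, x i * star (x i) = (2 : B))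
    (bc : BasicConstruction E C)
    (Φ : C ≃⋆ₐ[ℂ] C)
    (hΦB : ∀ b : B, Φ (bc.ι b) = bc.ι b)
    (hΦe : Φ bc.e = 1 - bc.e)
    (Cn : C → Prop) (hCn : ∀ y, Cn y ↔ bc.e * y * (1 - bc.e) = y)
    (Bm : Set B) (hBm : Bm = {b : B | E.toFun b = 0}) :
    -- B₋ = {b : β(b) = −b}
    (Bm = {b : B | 2 * E.toFun b - b = -b}) ∧
    -- B₋ is an A-A-subbimodule of B, closed under the involution x^♯ = x*
    (∀ a ∈ A, ∀ b ∈ Bm, a * b ∈ Bm ∧ b * a ∈ Bm) ∧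
    (∀ b ∈ Bm, star b ∈ Bm) ∧
    -- imprimitivity for the inner products _A⟨x,y⟩ = E(xy*), ⟨x,y⟩_A = E(x*y)
    (∀ p ∈ Bm, ∀ q ∈ Bm, ∀ r ∈ Bm, E.toFun (p * star q) * r = p * E.toFun (star q * r)) ∧
    -- fullness of both inner products
    ((Submodule.span ℂ {a : B | ∃ p ∈ Bm, ∃ q ∈ Bm, a = E.toFun (p * star q)}).topologicalClosure
       = Subalgebra.toSubmodule A.toSubalgebra) ∧
    ((Submodule.span ℂ {a : B | ∃ p ∈ Bm, ∃ q ∈ Bm, a = E.toFun (star p * q)}).topologicalClosure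
       = Subalgebra.toSubmodule A.toSubalgebra) ∧
    -- B₋ ≅ X_B as involutive bimodules, via x ↦ φ(x) − E(φ(x)) where e_A x = e_A φ(x)
    (∃ f : C → B,
      (∀ y : C, bc.e * y = bc.e * bc.ι (f y)) ∧
      (Set.BijOn (fun y => f y - E.toFun (f y)) {y | Cn y} Bm) ∧
      (∀ y z, Cn y → Cn z →
        (f (y + z) - E.toFun (f (y + z))) = (f y - E.toFun (f y)) + (f z - E.toFun (f z))) ∧
      (∀ (c : ℂ) (y : C), Cn y →
        (f (c • y) - E.toFun (f (c • y))) = c • (f y - E.toFun (f y))) ∧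
      -- intertwines the A-A-actions
      (∀ a ∈ A, ∀ y, Cn y →
        (f (bc.ι a * y) - E.toFun (f (bc.ι a * y))) = a * (f y - E.toFun (f y)) ∧
        (f (y * bc.ι a) - E.toFun (f (y * bc.ι a))) = (f y - E.toFun (f y)) * a) ∧
      -- preserves both inner products
      (∀ y z, Cn y → Cn z →
        bc.ι (E.toFun ((f y - E.toFun (f y)) * star (f z - E.toFun (f z)))) * bc.e
          = y * star z ∧
        bc.ι (E.toFun (star (f y - E.toFun (f y)) * (f z - E.toFun (f z)))) * (1 - bc.e)
          = star y * z) ∧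
      -- preserves the involutions: f(y^♯) = f(y)* on the corner
      (∀ y, Cn y →
        (f (Φ (star y)) - E.toFun (f (Φ (star y)))) = star (f y - E.toFun (f y)))) := by
  open BasicConstruction in
  let _ : CStarAlgebra B := { ‹NormedRing B›, ‹StarRing B›, ‹CStarRing B›, ‹NormedAlgebra ℂ B›,
    ‹StarModule ℂ B›, ‹CompleteSpace B› with }
  let _ : CStarAlgebra C := { ‹NormedRing C›, ‹StarRing C›, ‹CStarRing C›, ‹NormedAlgebra ℂ C›,
    ‹StarModule ℂ C›, ‹CompleteSpace C› with }
  obtain rfl : Cn = fun y => bc.e * y * (1 - bc.e) = y := funext fun y => propext (hCn y)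
  subst hBm
  have hc : bc.ComplIsJones := complIsJones_of_starAlgEquiv Φ hΦB hΦe
  have hA : (Subalgebra.toSubmodule A.toSubalgebra).topologicalClosure
      = Subalgebra.toSubmodule A.toSubalgebra := IsClosed.submodule_topologicalClosure_eq
    (CondExp.isClosed_subalgebra fun _ _ hp hq => toFun_mul_of_ker hc hp hq)
  choose f hf using exists_e_mul_eq_e_mul_ι hc
  refine ⟨Set.ext fun b => (E.two_mul_toFun_sub_eq_neg_iff b).symm,
    fun a ha b hb => ⟨E.toFun_mul_left_eq_zero ha hb, E.toFun_mul_right_eq_zero ha hb⟩,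
    fun b => E.toFun_star_eq_zero,
    fun p hp q hq r hr => ?_, ?_, ?_, f, hf, bijOn_sub_toFun hc hf, fun y z _ _ => ?_,
    fun c y _ => ?_, fun a ha y _ => ⟨?_, ?_⟩, fun y z hy hz => ?_, fun y hy => ?_⟩
  · rw [toFun_mul_of_ker hc hp (E.toFun_star_eq_zero hq),
      toFun_mul_of_ker hc (E.toFun_star_eq_zero hq) hr, mul_assoc]
  · exact (congrArg _ (span_toFun_mul_star_of_ker hc hx hidx)).trans hA
  · exact (congrArg _ (span_toFun_star_mul_of_ker hc hx hidx)).trans hA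
  · rw [apply_add hc hf, map_add]; abel
  · rw [apply_smul hc hf, map_smul, smul_sub]
  · rw [apply_ι_mul hc hf ha, E.left_mod a ha, mul_sub]
  · rw [apply_mul_ι hc hf, E.right_mod a ha, sub_mul]
  · obtain ⟨p, hp, rfl⟩ := (mem_corner_iff hc hf).mp hy
    obtain ⟨q, hq, rfl⟩ := (mem_corner_iff hc hf).mp hz
    rw [apply_e_mul_ι hc hf, apply_e_mul_ι hc hf, hp, hq, sub_zero, sub_zero]
    exact ⟨(e_mul_ι_mul_star_e_mul_ι p q).symm, (star_e_mul_ι_mul_e_mul_ι hc hp hq).symm⟩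
  · obtain ⟨p, hp, rfl⟩ := (mem_corner_iff hc hf).mp hy
    rw [star_mul, bc.e_star, ← map_star, map_mul, hΦB, hΦe,
      apply_ι_mul_one_sub_e hc hf (E.toFun_star_eq_zero hp), E.toFun_star_eq_zero hp,
      apply_e_mul_ι hc hf, hp, sub_zero, sub_zero]

/-- `B₋ = {b ∈ B : E(b) = 0} = {b : β(b) = −b}`, with the bimodule
structure inherited from `B`, inner products `_A⟨x,y⟩ = E(xy*)`, `⟨x,y⟩_A = E(x*y)` and
involution `x^♯ = x*`, is an involutive A-A-equivalence bimodule, and it is isomorphic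
to `X_B = e_A C*⟨B,e_A⟩(1−e_A)` as involutive A-A-equivalence bimodules. -/
theorem Bminus_involutive_bimodule_iso_corner
    {B C : Type*} [NormedRing B] [StarRing B] [CStarRing B] [NormedAlgebra ℂ B]
    [StarModule ℂ B] [CompleteSpace B]
    [NormedRing C] [StarRing C] [CStarRing C] [NormedAlgebra ℂ C]
    [StarModule ℂ C] [CompleteSpace C]
    {A : StarSubalgebra ℂ B} (E : CondExp B A)
    {n : ℕ} (x : Fin n → B) (hx : IsQuasiBasis E x)
    (hidx : ∑ i, x i * star (x i) = (2 : B))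
    (bc : BasicConstruction E C)
    (Et : C →ₗ[ℂ] B)
    (hEt : ∀ b c : B, Et (bc.ι b * bc.e * bc.ι c) = ((2 : ℂ))⁻¹ • (b * c))
    (Φ : C ≃⋆ₐ[ℂ] C)
    (hΦB : ∀ b : B, Φ (bc.ι b) = bc.ι b)
    (hΦe : Φ bc.e = 1 - bc.e)
    (hΦ2 : ∀ y : C, Φ (Φ y) = y)
    (Cn : C → Prop) (hCn : ∀ y, Cn y ↔ bc.e * y * (1 - bc.e) = y)
    (Bm : Set B) (hBm : Bm = {b : B | E.toFun b = 0}) :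
    -- B₋ = {b : β(b) = −b}
    (Bm = {b : B | 2 * E.toFun b - b = -b}) ∧
    -- B₋ is an A-A-subbimodule of B, closed under the involution x^♯ = x*
    (∀ a ∈ A, ∀ b ∈ Bm, a * b ∈ Bm ∧ b * a ∈ Bm) ∧
    (∀ b ∈ Bm, star b ∈ Bm) ∧
    -- imprimitivity for the inner products _A⟨x,y⟩ = E(xy*), ⟨x,y⟩_A = E(x*y)
    (∀ p ∈ Bm, ∀ q ∈ Bm, ∀ r ∈ Bm, E.toFun (p * star q) * r = p * E.toFun (star q * r)) ∧
    -- fullness of both inner products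
    ((Submodule.span ℂ {a : B | ∃ p ∈ Bm, ∃ q ∈ Bm, a = E.toFun (p * star q)}).topologicalClosure
       = Subalgebra.toSubmodule A.toSubalgebra) ∧
    ((Submodule.span ℂ {a : B | ∃ p ∈ Bm, ∃ q ∈ Bm, a = E.toFun (star p * q)}).topologicalClosure
       = Subalgebra.toSubmodule A.toSubalgebra) ∧
    -- B₋ ≅ X_B as involutive bimodules, via x ↦ φ(x) − E(φ(x)) where e_A x = e_A φ(x)
    (∃ f : C → B,
      (∀ y : C, bc.e * y = bc.e * bc.ι (f y)) ∧
      (Set.BijOn (fun y => f y - E.toFun (f y)) {y | Cn y} Bm) ∧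
      (∀ y z, Cn y → Cn z →
        (f (y + z) - E.toFun (f (y + z))) = (f y - E.toFun (f y)) + (f z - E.toFun (f z))) ∧
      (∀ (c : ℂ) (y : C), Cn y →
        (f (c • y) - E.toFun (f (c • y))) = c • (f y - E.toFun (f y))) ∧
      -- intertwines the A-A-actions
      (∀ a ∈ A, ∀ y, Cn y →
        (f (bc.ι a * y) - E.toFun (f (bc.ι a * y))) = a * (f y - E.toFun (f y)) ∧
        (f (y * bc.ι a) - E.toFun (f (y * bc.ι a))) = (f y - E.toFun (f y)) * a) ∧
      -- preserves both inner products
      (∀ y z, Cn y → Cn z →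
        bc.ι (E.toFun ((f y - E.toFun (f y)) * star (f z - E.toFun (f z)))) * bc.e
          = y * star z ∧
        bc.ι (E.toFun (star (f y - E.toFun (f y)) * (f z - E.toFun (f z)))) * (1 - bc.e)
          = star y * z) ∧
      -- preserves the involutions: f(y^♯) = f(y)* on the corner
      (∀ y, Cn y →
        (f (Φ (star y)) - E.toFun (f (Φ (star y)))) = star (f y - E.toFun (f y)))) :=
  Bminus_involutive_bimodule_iso_corner_general E x hx hidx bc Φ hΦB hΦe Cn hCn Bm hBm
end
end

section
/- Let A_θ be the irrational rotation C*-algebra with unitary generators u, v satisfying uv = e^{2πiθ}vu, and let A_{2θ} ⊂ A_θ be the C*-subalgebra generated by u² and v. Then there is no ℤ₂-action β on A_{2θ} such that A_θ ≅ A_{2θ} ⋊_β ℤ₂. (Otherwise the projection (1+w)/2 for the implementing self-adjoint unitary w would have trace 1/2, contradicting τ(K₀-projections of A_θ) = (ℤ + θℤ) ∩ (0,1) ∪ {0,1}.) -/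
/-!
The symmetry `w` of a `ℤ₂`-crossed product `B ⋊ ℤ₂ = B ⊕ Bw` defines the dual automorphism
`a + bw ↦ a - bw`. Composing the trace with it gives another tracial state, so by uniqueness the
trace is invariant under it and `τ w = τ (-w) = 0`. Then `(1 + w) / 2` is a projection of trace
`1/2`, which does not lie in `ℤ + θℤ` for irrational `θ`.
-/

noncomputable section

open scoped ComplexOrder

section Symmetry

variable {A : Type*} [Ring A] {w : A}

theorem add_mul_mul_add_mul_of_mul_self_eq_one (hw : w * w = 1) (p q c d : A) :
    (p + q * w) * (c + d * w) = (p * c + q * (w * d * w)) + (p * d + q * (w * c * w)) * w := by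
  have key : (p * c + q * (w * d * w)) + (p * d + q * (w * c * w)) * w - (p + q * w) * (c + d * w)
      = q * w * c * (w * w - 1) := by noncomm_ring
  rw [hw, sub_self, mul_zero, sub_eq_zero] at key
  exact key.symm

variable [StarRing A]

theorem star_add_mul_of_mul_self_eq_one (hs : star w = w) (hw : w * w = 1) (p q : A) :
    star (p + q * w) = star p + (w * star q * w) * w := by
  rw [star_add, star_mul, hs, mul_assoc, hw, mul_one]

theorem isStarProjection_inv_two_smul_one_add {𝕜 : Type*} [Field 𝕜] [CharZero 𝕜] [StarRing 𝕜]
    [Algebra 𝕜 A] [StarModule 𝕜 A] (hs : star w = w) (hw : w * w = 1) :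
    IsStarProjection ((2 : 𝕜)⁻¹ • (1 + w)) where
  isIdempotentElem := by
    have h : (1 + w) * (1 + w) = 2 • (1 + w) := by
      simp only [add_mul, mul_add, hw, one_mul, mul_one, two_nsmul]
      abel
    rw [IsIdempotentElem, smul_mul_smul_comm, h]
    module
  isSelfAdjoint := by
    rw [IsSelfAdjoint, star_smul, star_add, star_one, hs, star_inv₀, star_ofNat]

end Symmetry

section CrossedProduct

variable {R A : Type*} [CommRing R] [StarRing R] [Ring A] [StarRing A] [Algebra R A]
  [StarModule R A]

/-- `A = B ⋊ ℤ₂`, the generator of `ℤ₂` acting on `B` by conjugation with the symmetry `w`. -/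
structure IsZ2CrossedProduct (B : StarSubalgebra R A) (w : A) : Prop where
  star_self : star w = w
  mul_self : w * w = 1
  conj_mem : ∀ a ∈ B, w * a * w ∈ B
  exists_decomp : ∀ x : A, ∃ a ∈ B, ∃ b ∈ B, x = a + b * w
  decomp_unique : ∀ a ∈ B, ∀ b ∈ B, a + b * w = 0 → a = 0 ∧ b = 0

namespace IsZ2CrossedProduct

variable {B : StarSubalgebra R A} {w : A}

theorem decomp_injective (h : IsZ2CrossedProduct B w) {a b c d : A} (ha : a ∈ B) (hb : b ∈ B)
    (hc : c ∈ B) (hd : d ∈ B) (heq : a + b * w = c + d * w) : a = c ∧ b = d := by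
  have h0 : (a - c) + (b - d) * w = 0 :=
    calc (a - c) + (b - d) * w = (a + b * w) - (c + d * w) := by noncomm_ring
      _ = 0 := by rw [heq, sub_self]
  obtain ⟨hac, hbd⟩ := h.decomp_unique _ (sub_mem ha hc) _ (sub_mem hb hd) h0
  exact ⟨sub_eq_zero.mp hac, sub_eq_zero.mp hbd⟩

variable (h : IsZ2CrossedProduct B w)

def fst (x : A) : A := (h.exists_decomp x).choose

def snd (x : A) : A := (h.exists_decomp x).choose_spec.2.choose

theorem fst_mem (x : A) : h.fst x ∈ B := (h.exists_decomp x).choose_spec.1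

theorem snd_mem (x : A) : h.snd x ∈ B := (h.exists_decomp x).choose_spec.2.choose_spec.1

theorem eq_fst_add_snd_mul (x : A) : x = h.fst x + h.snd x * w :=
  (h.exists_decomp x).choose_spec.2.choose_spec.2

def dual (x : A) : A := h.fst x - h.snd x * w

theorem dual_add_mul {a b : A} (ha : a ∈ B) (hb : b ∈ B) : h.dual (a + b * w) = a - b * w := by
  obtain ⟨hfst, hsnd⟩ := h.decomp_injective (h.fst_mem _) (h.snd_mem _) ha hb
    (h.eq_fst_add_snd_mul (a + b * w)).symm
  rw [dual, hfst, hsnd]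

theorem dual_of_mem {a : A} (ha : a ∈ B) : h.dual a = a := by
  simpa using h.dual_add_mul ha (zero_mem B)

theorem dual_self : h.dual w = -w := by
  simpa using h.dual_add_mul (zero_mem B) (one_mem B)

theorem dual_add (x y : A) : h.dual (x + y) = h.dual x + h.dual y := by
  obtain ⟨a, ha, b, hb, rfl⟩ := h.exists_decomp x
  obtain ⟨c, hc, d, hd, rfl⟩ := h.exists_decomp y
  rw [add_add_add_comm, ← add_mul, h.dual_add_mul (add_mem ha hc) (add_mem hb hd),
    h.dual_add_mul ha hb, h.dual_add_mul hc hd]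
  noncomm_ring

theorem dual_mul (x y : A) : h.dual (x * y) = h.dual x * h.dual y := by
  obtain ⟨a, ha, b, hb, rfl⟩ := h.exists_decomp x
  obtain ⟨c, hc, d, hd, rfl⟩ := h.exists_decomp y
  rw [add_mul_mul_add_mul_of_mul_self_eq_one h.mul_self,
    h.dual_add_mul (add_mem (mul_mem ha hc) (mul_mem hb (h.conj_mem _ hd)))
      (add_mem (mul_mem ha hd) (mul_mem hb (h.conj_mem _ hc))),
    h.dual_add_mul ha hb, h.dual_add_mul hc hd, sub_eq_add_neg a, sub_eq_add_neg c, ← neg_mul,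
    ← neg_mul, add_mul_mul_add_mul_of_mul_self_eq_one h.mul_self]
  noncomm_ring

theorem dual_star (x : A) : h.dual (star x) = star (h.dual x) := by
  obtain ⟨a, ha, b, hb, rfl⟩ := h.exists_decomp x
  rw [star_add_mul_of_mul_self_eq_one h.star_self h.mul_self,
    h.dual_add_mul (star_mem ha) (h.conj_mem _ (star_mem hb)), h.dual_add_mul ha hb,
    sub_eq_add_neg a, ← neg_mul, star_add_mul_of_mul_self_eq_one h.star_self h.mul_self, star_neg]
  noncomm_ring

def dualStarAlgHom : A →⋆ₐ[R] A where
  toFun := h.dual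
  map_one' := h.dual_of_mem (one_mem B)
  map_mul' := h.dual_mul
  map_zero' := h.dual_of_mem (zero_mem B)
  map_add' := h.dual_add
  commutes' r := h.dual_of_mem (algebraMap_mem B r)
  map_star' := h.dual_star

theorem dualStarAlgHom_apply (x : A) : h.dualStarAlgHom x = h.dual x := rfl

end IsZ2CrossedProduct

end CrossedProduct

section TracialState

structure IsTracialState {A : Type*} [Semiring A] [Algebra ℂ A] [Star A] (τ : A →ₗ[ℂ] ℂ) :
    Prop where
  map_one : τ 1 = 1
  map_mul_comm : ∀ x y : A, τ (x * y) = τ (y * x)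
  nonneg : ∀ x : A, 0 ≤ τ (star x * x)

theorem IsTracialState.comp_starAlgHom {A B : Type*} [Semiring A] [Algebra ℂ A] [Star A]
    [Semiring B] [Algebra ℂ B] [Star B] {τ : B →ₗ[ℂ] ℂ}
    (hτ : IsTracialState τ) (α : A →⋆ₐ[ℂ] B) : IsTracialState (τ ∘ₗ α.toLinearMap) where
  map_one := by simpa using hτ.map_one
  map_mul_comm x y := by simpa using hτ.map_mul_comm (α x) (α y)
  nonneg x := by simpa [map_star] using hτ.nonneg (α x)

theorem IsZ2CrossedProduct.tracialState_apply_eq_zero {A : Type*} [Ring A] [StarRing A]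
    [Algebra ℂ A] [StarModule ℂ A] {B : StarSubalgebra ℂ A} {w : A} (h : IsZ2CrossedProduct B w)
    {τ : A →ₗ[ℂ] ℂ} (hτ : IsTracialState τ) (huniq : ∀ σ, IsTracialState σ → σ = τ) :
    τ w = 0 := by
  have hinv := LinearMap.congr_fun (huniq _ (hτ.comp_starAlgHom h.dualStarAlgHom)) w
  rw [LinearMap.comp_apply, AlgHom.toLinearMap_apply, StarAlgHom.coe_toAlgHom,
    h.dualStarAlgHom_apply, h.dual_self, map_neg, neg_eq_iff_add_eq_zero, ← two_mul] at hinv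
  exact (mul_eq_zero.mp hinv).resolve_left two_ne_zero

end TracialState

theorem Irrational.inv_two_ne_intCast_add_mul_intCast {θ : ℝ} (hθ : Irrational θ) (m n : ℤ) :
    (2 : ℝ)⁻¹ ≠ m + θ * n := by
  rcases eq_or_ne n 0 with rfl | hn
  · intro h
    rw [Int.cast_zero, mul_zero, add_zero] at h
    have : (2 * m : ℤ) = 1 := by exact_mod_cast (by rw [← h]; norm_num : (2 : ℝ) * m = 1)
    omega
  · exact fun h => ((hθ.mul_intCast hn).intCast_add m).ne_rat (2⁻¹) (by rw [← h]; push_cast; rfl)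

theorem rotation_algebra_not_Z2_crossed_product_general
    {Aθ : Type*} [NormedRing Aθ] [StarRing Aθ] [NormedAlgebra ℂ Aθ]
    [StarModule ℂ Aθ]
    (θ : ℝ) (hθ : Irrational θ)
    -- the subalgebra A_{2θ} generated by u² and v
    (A2θ : StarSubalgebra ℂ Aθ)
    -- τ is the unique tracial state on A_θ
    (τ : Aθ →ₗ[ℂ] ℂ)
    (hτ1 : τ 1 = 1)
    (hτtr : ∀ x y : Aθ, τ (x * y) = τ (y * x))
    (hτpos : ∀ x : Aθ, 0 ≤ τ (star x * x))
    (hτuniq : ∀ σ : Aθ →ₗ[ℂ] ℂ, σ 1 = 1 → (∀ x y : Aθ, σ (x * y) = σ (y * x)) →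
      (∀ x : Aθ, 0 ≤ σ (star x * x)) → σ = τ)
    -- the values of τ on projections lie in ℤ + θℤ
    (hτproj : ∀ p : Aθ, star p = p → p * p = p → ∃ m n : ℤ, τ p = (m : ℂ) + (θ : ℂ) * n) :
    ¬ ∃ w : Aθ, star w = w ∧ w * w = 1 ∧
        (∀ a ∈ A2θ, w * a * w ∈ A2θ) ∧
        (∀ x : Aθ, ∃ a ∈ A2θ, ∃ b ∈ A2θ, x = a + b * w) ∧
        (∀ a ∈ A2θ, ∀ b ∈ A2θ, a + b * w = 0 → a = 0 ∧ b = 0) := by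
  rintro ⟨w, hs, hw, hconj, hdecomp, hunique⟩
  have h : IsZ2CrossedProduct A2θ w := ⟨hs, hw, hconj, hdecomp, hunique⟩
  have hτw : τ w = 0 := h.tracialState_apply_eq_zero ⟨hτ1, hτtr, hτpos⟩
    fun σ hσ => hτuniq σ hσ.map_one hσ.map_mul_comm hσ.nonneg
  have hp := isStarProjection_inv_two_smul_one_add (𝕜 := ℂ) hs hw
  obtain ⟨m, n, hmn⟩ := hτproj _ hp.isSelfAdjoint hp.isIdempotentElem
  rw [map_smul, map_add, hτ1, hτw, add_zero, smul_eq_mul, mul_one] at hmn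
  exact hθ.inv_two_ne_intCast_add_mul_intCast m n
    (Complex.ofReal_injective (by push_cast; exact hmn))

/-- the irrational rotation algebra `A_θ` (generated by unitaries `u, v`
with `uv = e^{2πiθ}vu`, with unique tracial state `τ` whose values on projections lie
in `ℤ + θℤ`) is not a ℤ₂-crossed product of the subalgebra `A_{2θ}` generated by
`u², v`: there is no self-adjoint unitary `w ∈ A_θ` normalizing `A_{2θ}` with
`A_θ = A_{2θ} + A_{2θ}w` (with unique decomposition). -/
theorem rotation_algebra_not_Z2_crossed_product
    {Aθ : Type*} [NormedRing Aθ] [StarRing Aθ] [CStarRing Aθ] [NormedAlgebra ℂ Aθ]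
    [StarModule ℂ Aθ] [CompleteSpace Aθ]
    (θ : ℝ) (hθ : Irrational θ) (hθ01 : θ ∈ Set.Ioo (0 : ℝ) 1)
    (u v : Aθ)
    (hu : star u * u = 1 ∧ u * star u = 1)
    (hv : star v * v = 1 ∧ v * star v = 1)
    (hcomm : u * v = Complex.exp (2 * Real.pi * θ * Complex.I) • (v * u))
    -- A_θ is generated by u and v
    (hgen : (StarAlgebra.adjoin ℂ {u, v} : StarSubalgebra ℂ Aθ).topologicalClosure = ⊤)
    -- the subalgebra A_{2θ} generated by u² and v
    (A2θ : StarSubalgebra ℂ Aθ)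
    (hA2θ : A2θ = (StarAlgebra.adjoin ℂ {u * u, v}).topologicalClosure)
    (hdecu : ∀ x : Aθ, ∃ a ∈ A2θ, ∃ b ∈ A2θ, x = a + b * u)
    -- τ is the unique tracial state on A_θ
    (τ : Aθ →ₗ[ℂ] ℂ)
    (hτ1 : τ 1 = 1)
    (hτtr : ∀ x y : Aθ, τ (x * y) = τ (y * x))
    (hτpos : ∀ x : Aθ, 0 ≤ τ (star x * x))
    (hτuniq : ∀ σ : Aθ →ₗ[ℂ] ℂ, σ 1 = 1 → (∀ x y : Aθ, σ (x * y) = σ (y * x)) →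
      (∀ x : Aθ, 0 ≤ σ (star x * x)) → σ = τ)
    -- the values of τ on projections lie in ℤ + θℤ
    (hτproj : ∀ p : Aθ, star p = p → p * p = p → ∃ m n : ℤ, τ p = (m : ℂ) + (θ : ℂ) * n) :
    ¬ ∃ w : Aθ, star w = w ∧ w * w = 1 ∧
        (∀ a ∈ A2θ, w * a * w ∈ A2θ) ∧
        (∀ x : Aθ, ∃ a ∈ A2θ, ∃ b ∈ A2θ, x = a + b * w) ∧
        (∀ a ∈ A2θ, ∀ b ∈ A2θ, a + b * w = 0 → a = 0 ∧ b = 0) :=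
  rotation_algebra_not_Z2_crossed_product_general θ hθ A2θ τ hτ1 hτtr hτpos hτuniq hτproj

end
end
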